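/- arXiv:2403.19908 — 7 statements merged into one kernel-verified Lean document; each statement's English description precedes it below -/
import Mathlib

section
/- Let H be a Hopf algebra over a field k with antipode S. Define [a,b,c] := a·S(b)·c for a,b,c ∈ H. Then the underlying coalgebra of H together with this ternary operation is a Hopf heap; explicitly: ε(aS(b)c) = ε(a)ε(b)ε(c); Δ(aS(b)c) = a₁S(b₂)c₁ ⊗ a₂S(b₁)c₂ (Sweedler notation); (aS(b)c)S(d)h = aS(b)(cS(d)h); and c₁S(c₂)a = ε(c)a = aS(c₁)c₂ for all a,b,c,d,h ∈ H. -/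
open TensorProduct

noncomputable section

variable (k : Type*) [Field k]

section Shuffles

variable (A B P Q R S : Type*)
  [AddCommGroup A] [Module k A] [AddCommGroup B] [Module k B]
  [AddCommGroup P] [Module k P] [AddCommGroup Q] [Module k Q]
  [AddCommGroup R] [Module k R] [AddCommGroup S] [Module k S]

/-- `(a ⊗ b) ⊗ ((p ⊗ q) ⊗ (r ⊗ s)) ↦ (a ⊗ (q ⊗ r)) ⊗ (b ⊗ (p ⊗ s))`, the shuffle appearing in
the compatibility of a Hopf-heap bracket with comultiplication:
`Δ([a,b,c]) = [a₁,b₂,c₁] ⊗ [a₂,b₁,c₂]`. -/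
def sweedlerShuffle :
    ((A ⊗[k] B) ⊗[k] ((P ⊗[k] Q) ⊗[k] (R ⊗[k] S))) →ₗ[k]
      ((A ⊗[k] (Q ⊗[k] R)) ⊗[k] (B ⊗[k] (P ⊗[k] S))) :=
  (tensorTensorTensorComm k A B (Q ⊗[k] R) (P ⊗[k] S)).toLinearMap ∘ₗ
    (TensorProduct.map LinearMap.id
      ((tensorTensorTensorComm k Q P R S).toLinearMap ∘ₗ
        TensorProduct.map (TensorProduct.comm k P Q).toLinearMap LinearMap.id))

/-- `u₁ ⊗ (u₂ ⊗ (u₃ ⊗ u₄)) ↦ (u₁ ⊗ (u₄ ⊗ u₂)) ⊗ u₃`, the shuffle appearing in the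
Rota–Baxter identity. -/
def rbShuffle :
    (A ⊗[k] (P ⊗[k] (Q ⊗[k] R))) →ₗ[k] ((A ⊗[k] (R ⊗[k] P)) ⊗[k] Q) :=
  (TensorProduct.assoc k A (R ⊗[k] P) Q).symm.toLinearMap ∘ₗ
    TensorProduct.map LinearMap.id
      ((TensorProduct.comm k Q (R ⊗[k] P)).toLinearMap ∘ₗ
        (TensorProduct.assoc k Q R P).toLinearMap ∘ₗ
        (TensorProduct.comm k P (Q ⊗[k] R)).toLinearMap)

end Shuffles

section Mul

variable {C : Type*} [AddCommGroup C] [Module k C]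

/-- Right multiplication `a ↦ μ (a ⊗ b)` by a fixed element, for a bilinear product `μ`. -/
def rmulBy (μ : (C ⊗[k] C) →ₗ[k] C) (b : C) : C →ₗ[k] C :=
  μ ∘ₗ ((TensorProduct.mk k C C).flip b)

end Mul

section Heap

variable {C : Type*} [AddCommGroup C] [Module k C] [Coalgebra k C]

/-- Iterated comultiplication `a ↦ a₁ ⊗ (a₂ ⊗ a₃)`. -/
def comul2 : C →ₗ[k] (C ⊗[k] (C ⊗[k] C)) :=
  (TensorProduct.map LinearMap.id Coalgebra.comul) ∘ₗ Coalgebra.comul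

/-- Iterated comultiplication `a ↦ a₁ ⊗ (a₂ ⊗ (a₃ ⊗ a₄))`. -/
def comul3 : C →ₗ[k] (C ⊗[k] (C ⊗[k] (C ⊗[k] C))) :=
  (TensorProduct.map LinearMap.id (comul2 k)) ∘ₗ Coalgebra.comul

/-- The pointwise ternary bracket `[a,b,c]` of a Hopf heap with structure map `χ`. -/
def br (χ : (C ⊗[k] (C ⊗[k] C)) →ₗ[k] C) (a b c : C) : C := χ (a ⊗ₜ[k] (b ⊗ₜ[k] c))

/-- `x` is a group-like element of the coalgebra `C`. -/
def IsGrouplike (x : C) : Prop :=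
  Coalgebra.comul (R := k) x = x ⊗ₜ[k] x ∧ Coalgebra.counit (R := k) x = 1

/-- `(C, Δ, ε, χ)` is a Hopf heap: `χ` is a coalgebra map `C ⊗ C^cop ⊗ C → C`
(counit and comultiplication conditions, the latter in the Sweedler form
`Δ([a,b,c]) = [a₁,b₂,c₁] ⊗ [a₂,b₁,c₂]`), the bracket is associative
(`[[a,b,c],d,h] = [a,b,[c,d,h]]`), and `[c₁,c₂,a] = ε(c)a = [a,c₁,c₂]`. -/
structure IsHopfHeap (χ : (C ⊗[k] (C ⊗[k] C)) →ₗ[k] C) : Prop where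
  counit_br : ∀ a b c : C,
    Coalgebra.counit (R := k) (br k χ a b c) =
      Coalgebra.counit (R := k) a * Coalgebra.counit (R := k) b * Coalgebra.counit (R := k) c
  comul_br : ∀ a b c : C,
    Coalgebra.comul (R := k) (br k χ a b c) =
      TensorProduct.map χ χ (sweedlerShuffle k C C C C C C
        ((Coalgebra.comul (R := k) a) ⊗ₜ[k]
          ((Coalgebra.comul (R := k) b) ⊗ₜ[k] (Coalgebra.comul (R := k) c))))
  assoc_br : ∀ a b c d h : C,
    br k χ (br k χ a b c) d h = br k χ a b (br k χ c d h)
  left_cancel : ∀ c a : C,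
    χ ((TensorProduct.assoc k C C C) ((Coalgebra.comul (R := k) c) ⊗ₜ[k] a)) =
      Coalgebra.counit (R := k) c • a
  right_cancel : ∀ c a : C,
    χ (a ⊗ₜ[k] (Coalgebra.comul (R := k) c)) = Coalgebra.counit (R := k) c • a

/-- `B` is a Rota–Baxter operator on the Hopf heap `(C, Δ, χ)`:
`B [a,b,c] = [B a, B b, B c]` and
`B(a₁) ⊗ B(a₂) = [B(a)₁, B(B(a)₄), B(B(a)₂)] ⊗ B(a)₃`. -/
structure IsRBOp (χ : (C ⊗[k] (C ⊗[k] C)) →ₗ[k] C) (B : C →ₗ[k] C) : Prop where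
  map_br : ∀ a b c : C, B (br k χ a b c) = br k χ (B a) (B b) (B c)
  rb : ∀ a : C,
    TensorProduct.map B B (Coalgebra.comul (R := k) a) =
      TensorProduct.map (χ ∘ₗ TensorProduct.map LinearMap.id (TensorProduct.map B B))
        LinearMap.id (rbShuffle k C C C C (comul3 k (B a)))

/-- The multiplication `a ·ₓ b = [a, x, b]` of the Hopf algebra `H_x(C)`, as a linear map. -/
def heapMul (χ : (C ⊗[k] (C ⊗[k] C)) →ₗ[k] C) (x : C) : (C ⊗[k] C) →ₗ[k] C :=
  χ ∘ₗ TensorProduct.map LinearMap.id (TensorProduct.mk k C C x)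

/-- The antipode `S_x(a) = [x, a, x]` of the Hopf algebra `H_x(C)`, as a linear map. -/
def heapAntipode (χ : (C ⊗[k] (C ⊗[k] C)) →ₗ[k] C) (x : C) : C →ₗ[k] C :=
  χ ∘ₗ (TensorProduct.mk k C (C ⊗[k] C) x) ∘ₗ ((TensorProduct.mk k C C).flip x)

end Heap

section HeapHom

variable {C D : Type*} [AddCommGroup C] [Module k C] [Coalgebra k C]
  [AddCommGroup D] [Module k D] [Coalgebra k D]

/-- `f` is a homomorphism of Hopf heaps: a coalgebra map preserving the bracket. -/
def IsHeapHom (χC : (C ⊗[k] (C ⊗[k] C)) →ₗ[k] C) (χD : (D ⊗[k] (D ⊗[k] D)) →ₗ[k] D)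
    (f : C →ₗ[k] D) : Prop :=
  (∀ a : C, Coalgebra.comul (R := k) (f a) = TensorProduct.map f f (Coalgebra.comul (R := k) a)) ∧
  (∀ a : C, Coalgebra.counit (R := k) (f a) = Coalgebra.counit (R := k) a) ∧
  (∀ a b c : C, f (br k χC a b c) = br k χD (f a) (f b) (f c))

end HeapHom

section HopfAlg

variable (H : Type*) [Ring H] [HopfAlgebra k H]

/-- The Hopf-heap structure map `a ⊗ b ⊗ c ↦ a · S(b) · c` of a Hopf algebra. -/
def hopfHeapChi : (H ⊗[k] (H ⊗[k] H)) →ₗ[k] H :=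
  (LinearMap.mul' k H) ∘ₗ TensorProduct.map LinearMap.id
    ((LinearMap.mul' k H) ∘ₗ TensorProduct.map (HopfAlgebra.antipode (R := k)) LinearMap.id)

/-- The triple multiplication `a ⊗ (b ⊗ c) ↦ a·(b·c)`. -/
def mulTriple : (H ⊗[k] (H ⊗[k] H)) →ₗ[k] H :=
  (LinearMap.mul' k H) ∘ₗ TensorProduct.map LinearMap.id (LinearMap.mul' k H)

end HopfAlg

end

/-!
With `[a,b,c] = a S(b) c`, associativity and the counit law are immediate, and the two
cancellation laws are the two antipode axioms. Compatibility with `Δ` amounts to `S` being an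
anti-coalgebra map, `Δ (S b) = S b₂ ⊗ S b₁`. This is proved in the convolution algebra
`Hom(H, H ⊗ H)`: there `Δ = ι₁ * ι₂` with `ι₁ a = a ⊗ 1`, `ι₂ a = 1 ⊗ a`, each algebra map `ι`
has convolution inverse `ι ∘ S`, so `(ι₂ ∘ S) * (ι₁ ∘ S) = τ ∘ (S ⊗ S) ∘ Δ` is a left inverse
of `Δ`, while `Δ ∘ S` is a right inverse of it.
-/

open TensorProduct Coalgebra HopfAlgebra WithConv

namespace AlgHom

variable {R A B : Type*} [CommSemiring R] [Semiring B] [Algebra R B]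

lemma toConv_comp_convOne {C : Type*} [Semiring C] [Algebra R C] [AddCommMonoid A] [Module R A]
    [Coalgebra R A] (f : C →ₐ[R] B) :
    toConv (f.toLinearMap ∘ₗ (1 : WithConv (A →ₗ[R] C)).ofConv) = 1 := by
  ext; simp

variable [Semiring A] [HopfAlgebra R A]

lemma toConv_comp_antipode_mul_toConv (f : A →ₐ[R] B) :
    toConv (f.toLinearMap ∘ₗ antipode R) * toConv f.toLinearMap = 1 := by
  have := LinearMap.algHom_comp_convMul_distrib f (toConv (antipode R)) (toConv LinearMap.id)
  rw [LinearMap.antipode_mul_id] at this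
  simpa [toConv_comp_convOne] using (congrArg toConv this).symm

end AlgHom

namespace HopfAlgebra

variable {R A : Type*} [CommSemiring R] [Semiring A] [HopfAlgebra R A]

lemma comul_comp_antipode :
    comul ∘ₗ antipode R (A := A) =
      (TensorProduct.comm R A A).toLinearMap ∘ₗ map (antipode R) (antipode R) ∘ₗ comul := by
  set inl := (Algebra.TensorProduct.includeLeft : A →ₐ[R] A ⊗[R] A).toLinearMap
  set inr := (Algebra.TensorProduct.includeRight : A →ₐ[R] A ⊗[R] A).toLinearMap
  have comul_eq : toConv (comul (R := R) (A := A)) = toConv inl * toConv inr := by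
    have : LinearMap.mul' R (A ⊗[R] A) ∘ₗ map inl inr = LinearMap.id := by ext; simp [inl, inr]
    ext a
    simp [LinearMap.convMul_def, ← LinearMap.comp_assoc, this]
  have flip_eq : toConv ((TensorProduct.comm R A A).toLinearMap ∘ₗ
        map (antipode R) (antipode R) ∘ₗ comul) =
      toConv (inr ∘ₗ antipode R) * toConv (inl ∘ₗ antipode R) := by
    have : LinearMap.mul' R (A ⊗[R] A) ∘ₗ map (inr ∘ₗ antipode R) (inl ∘ₗ antipode R) =
        (TensorProduct.comm R A A).toLinearMap ∘ₗ map (antipode R) (antipode R) := by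
      ext; simp [inl, inr]
    ext a
    simp [LinearMap.convMul_def, ← LinearMap.comp_assoc, this]
  have left_inv :
      toConv (inr ∘ₗ antipode R) * toConv (inl ∘ₗ antipode R) * toConv comul = 1 := by
    rw [comul_eq, mul_assoc, ← mul_assoc (toConv (inl ∘ₗ _)),
      AlgHom.toConv_comp_antipode_mul_toConv, one_mul, AlgHom.toConv_comp_antipode_mul_toConv]
  apply WithConv.toConv_injective
  rw [flip_eq]
  exact (left_inv_eq_right_inv left_inv LinearMap.comul_right_inv).symm

lemma comul_antipode (a : A) :
    comul (antipode R a) = TensorProduct.comm R A A (map (antipode R) (antipode R) (comul a)) :=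
  LinearMap.congr_fun comul_comp_antipode a

end HopfAlgebra

section HopfHeap

variable {k H : Type*} [Field k] [Ring H] [HopfAlgebra k H]

lemma br_hopfHeapChi (a b c : H) : br k (hopfHeapChi k H) a b c = a * antipode k b * c := by
  simp [br, hopfHeapChi, mul_assoc]

lemma hopfHeapChi_assoc_tmul (x : H ⊗[k] H) (a : H) :
    hopfHeapChi k H (TensorProduct.assoc k H H H (x ⊗ₜ a)) =
      LinearMap.mul' k H ((antipode k).lTensor H x) * a := by
  induction x using TensorProduct.induction_on with
  | zero => simp
  | tmul => simp [hopfHeapChi, mul_assoc]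
  | add x y hx hy => simp only [add_tmul, map_add, hx, hy, add_mul]

lemma hopfHeapChi_tmul (a : H) (x : H ⊗[k] H) :
    hopfHeapChi k H (a ⊗ₜ x) = a * LinearMap.mul' k H ((antipode k).rTensor H x) := by
  induction x using TensorProduct.induction_on with
  | zero => simp
  | tmul => simp [hopfHeapChi]
  | add x y hx hy => simp only [tmul_add, map_add, hx, hy, mul_add]

lemma map_hopfHeapChi_sweedlerShuffle (x y z : H ⊗[k] H) :
    map (hopfHeapChi k H) (hopfHeapChi k H) (sweedlerShuffle k H H H H H H (x ⊗ₜ (y ⊗ₜ z))) =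
      x * TensorProduct.comm k H H (map (antipode k) (antipode k) y) * z := by
  have : map (hopfHeapChi k H) (hopfHeapChi k H) ∘ₗ sweedlerShuffle k H H H H H H =
      LinearMap.mul' k (H ⊗[k] H) ∘ₗ map LinearMap.id (LinearMap.mul' k (H ⊗[k] H) ∘ₗ
        map ((TensorProduct.comm k H H).toLinearMap ∘ₗ map (antipode k) (antipode k))
          LinearMap.id) := by
    ext; simp [sweedlerShuffle, hopfHeapChi]
  simpa [mul_assoc] using LinearMap.congr_fun this (x ⊗ₜ (y ⊗ₜ z))

end HopfHeap

/-- a Hopf algebra `H` with `[a,b,c] := a·S(b)·c` is a Hopf heap; explicitly,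
the counit, comultiplication, associativity and cancellation conditions of a Hopf heap hold. -/
theorem hopfAlgebra_gives_hopfHeap (k : Type*) [Field k] (H : Type*) [Ring H]
    [HopfAlgebra k H] :
    (∀ a b c : H, br k (hopfHeapChi k H) a b c = a * (HopfAlgebra.antipode (R := k) b) * c) ∧
    IsHopfHeap k (hopfHeapChi k H) :=
  ⟨br_hopfHeapChi,
    { counit_br := fun a b c ↦ by simp [br_hopfHeapChi]
      comul_br := fun a b c ↦ by
        rw [br_hopfHeapChi, Bialgebra.comul_mul, Bialgebra.comul_mul, comul_antipode,
          map_hopfHeapChi_sweedlerShuffle]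
      assoc_br := fun a b c d h ↦ by simp only [br_hopfHeapChi, mul_assoc]
      left_cancel := fun c a ↦ by
        rw [hopfHeapChi_assoc_tmul, mul_antipode_lTensor_comul_apply, ← Algebra.smul_def]
      right_cancel := fun c a ↦ by
        rw [hopfHeapChi_tmul, mul_antipode_rTensor_comul_apply, ← Algebra.commutes,
          ← Algebra.smul_def] }⟩
end

section
/- Let (C, Δ, ε, [−,−,−]) be a Hopf heap over a field k and let x ∈ C be a group-like element. Define a·b := [a,x,b] and S_x(a) := [x,a,x] for a,b ∈ C. Then (C, ·, x, Δ, ε, S_x) is a Hopf algebra: the product · is associative with two-sided unit x, Δ and ε are algebra maps (Δ(a·b) = (a₁·b₁) ⊗ (a₂·b₂), Δ(x) = x ⊗ x, ε(a·b) = ε(a)ε(b), ε(x) = 1), and S_x(a₁)·a₂ = ε(a)x = a₁·S_x(a₂) for all a ∈ C. -/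
/-!
The unit laws of `a·b = [a,x,b]` are the cancellation laws `[c₁,c₂,a] = ε(c)a = [a,c₁,c₂]`
at the group-like `c = x`, and associativity of `·` is heap associativity. Since `Δx = x ⊗ x`
and `εx = 1`, the statement that the bracket is a coalgebra map specialises to `Δ` and `ε`
being multiplicative. For the antipode, heap associativity and the unit law give
`S_x(a₁)·a₂ = [[x,a₁,x],x,a₂] = [x,a₁,a₂]`, which is `ε(a)x` by cancellation, and
symmetrically `a₁·S_x(a₂) = [a₁,a₂,x] = ε(a)x`.
-/

open TensorProduct

section HeapOperations

variable {k : Type*} [Field k] {C : Type*} [AddCommGroup C] [Module k C]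
  {χ : (C ⊗[k] (C ⊗[k] C)) →ₗ[k] C} {x : C}

@[simp]
theorem heapMul_tmul (a b : C) : heapMul k χ x (a ⊗ₜ[k] b) = br k χ a x b := rfl

theorem map_comp_sweedlerShuffle_comp_map_tmul_self :
    TensorProduct.map χ χ ∘ₗ sweedlerShuffle k C C C C C C ∘ₗ
        TensorProduct.map LinearMap.id (TensorProduct.mk k _ _ (x ⊗ₜ[k] x)) =
      TensorProduct.map (heapMul k χ x) (heapMul k χ x) ∘ₗ
        (tensorTensorTensorComm k C C C C).toLinearMap := by
  ext
  rfl

end HeapOperations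

namespace IsHopfHeap

variable {k : Type*} [Field k] {C : Type*} [AddCommGroup C] [Module k C] [Coalgebra k C]
  {χ : (C ⊗[k] (C ⊗[k] C)) →ₗ[k] C} {x : C}

theorem br_self_self_left (hχ : IsHopfHeap k χ) (hx : IsGrouplike k x) (a : C) :
    br k χ x x a = a := by
  simpa [br, hx.1, hx.2] using hχ.left_cancel x a

theorem br_self_self_right (hχ : IsHopfHeap k χ) (hx : IsGrouplike k x) (a : C) :
    br k χ a x x = a := by
  simpa [br, hx.1, hx.2] using hχ.right_cancel x a

theorem heapMul_comp_map_heapAntipode_id (hχ : IsHopfHeap k χ) (hx : IsGrouplike k x) :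
    heapMul k χ x ∘ₗ TensorProduct.map (heapAntipode k χ x) LinearMap.id =
      χ ∘ₗ TensorProduct.mk k C (C ⊗[k] C) x := by
  ext a b
  change br k χ (br k χ x a x) x b = br k χ x a b
  rw [hχ.assoc_br, hχ.br_self_self_left hx]

theorem heapMul_comp_map_id_heapAntipode (hχ : IsHopfHeap k χ) (hx : IsGrouplike k x) :
    heapMul k χ x ∘ₗ TensorProduct.map LinearMap.id (heapAntipode k χ x) =
      χ ∘ₗ (TensorProduct.assoc k C C C).toLinearMap ∘ₗ
        (TensorProduct.mk k (C ⊗[k] C) C).flip x := by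
  ext a b
  change br k χ a x (br k χ x b x) = br k χ a b x
  rw [← hχ.assoc_br, hχ.br_self_self_right hx]

theorem heapMul_map_heapAntipode_id_comul (hχ : IsHopfHeap k χ) (hx : IsGrouplike k x) (a : C) :
    heapMul k χ x (TensorProduct.map (heapAntipode k χ x) LinearMap.id (Coalgebra.comul a)) =
      Coalgebra.counit (R := k) a • x := by
  rw [← LinearMap.comp_apply, hχ.heapMul_comp_map_heapAntipode_id hx]
  exact hχ.right_cancel a x

theorem heapMul_map_id_heapAntipode_comul (hχ : IsHopfHeap k χ) (hx : IsGrouplike k x) (a : C) :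
    heapMul k χ x (TensorProduct.map LinearMap.id (heapAntipode k χ x) (Coalgebra.comul a)) =
      Coalgebra.counit (R := k) a • x := by
  rw [← LinearMap.comp_apply, hχ.heapMul_comp_map_id_heapAntipode hx]
  exact hχ.left_cancel a x

theorem comul_heapMul (hχ : IsHopfHeap k χ) (hx : Coalgebra.comul (R := k) x = x ⊗ₜ[k] x)
    (a b : C) :
    Coalgebra.comul (R := k) (heapMul k χ x (a ⊗ₜ[k] b)) =
      TensorProduct.map (heapMul k χ x) (heapMul k χ x)
        (tensorTensorTensorComm k C C C C (Coalgebra.comul a ⊗ₜ[k] Coalgebra.comul b)) := by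
  rw [heapMul_tmul, hχ.comul_br, hx]
  exact LinearMap.congr_fun map_comp_sweedlerShuffle_comp_map_tmul_self
    (Coalgebra.comul a ⊗ₜ[k] Coalgebra.comul b)

theorem counit_heapMul (hχ : IsHopfHeap k χ) (hx : Coalgebra.counit (R := k) x = 1) (a b : C) :
    Coalgebra.counit (R := k) (heapMul k χ x (a ⊗ₜ[k] b)) =
      Coalgebra.counit (R := k) a * Coalgebra.counit (R := k) b := by
  rw [heapMul_tmul, hχ.counit_br, hx, mul_one]

end IsHopfHeap

/-- for a Hopf heap `(C, χ)` and a group-like `x`, the product `a·b := [a,x,b]`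
with unit `x` and antipode `S_x(a) := [x,a,x]` makes `C` a Hopf algebra `H_x(C)`. -/
theorem hopfHeap_gives_hopfAlgebra {k : Type*} [Field k] {C : Type*} [AddCommGroup C]
    [Module k C] [Coalgebra k C] (χ : (C ⊗[k] (C ⊗[k] C)) →ₗ[k] C)
    (hχ : IsHopfHeap k χ) (x : C) (hx : IsGrouplike k x) :
    -- the product as a linear map is given by the bracket
    (∀ a b : C, heapMul k χ x (a ⊗ₜ[k] b) = br k χ a x b) ∧
    -- associativity
    (∀ a b c : C, br k χ (br k χ a x b) x c = br k χ a x (br k χ b x c)) ∧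
    -- `x` is a two-sided unit
    (∀ a : C, br k χ x x a = a ∧ br k χ a x x = a) ∧
    -- `Δ` is an algebra map: `Δ(a·b) = (a₁·b₁) ⊗ (a₂·b₂)` and `Δ(x) = x ⊗ x`
    (∀ a b : C,
      Coalgebra.comul (R := k) (heapMul k χ x (a ⊗ₜ[k] b)) =
        TensorProduct.map (heapMul k χ x) (heapMul k χ x)
          ((tensorTensorTensorComm k C C C C)
            ((Coalgebra.comul (R := k) a) ⊗ₜ[k] (Coalgebra.comul (R := k) b)))) ∧
    (Coalgebra.comul (R := k) x = x ⊗ₜ[k] x) ∧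
    -- `ε` is an algebra map: `ε(a·b) = ε(a)ε(b)` and `ε(x) = 1`
    (∀ a b : C,
      Coalgebra.counit (R := k) (heapMul k χ x (a ⊗ₜ[k] b)) =
        Coalgebra.counit (R := k) a * Coalgebra.counit (R := k) b) ∧
    (Coalgebra.counit (R := k) x = 1) ∧
    -- antipode: `S_x(a₁)·a₂ = ε(a)x = a₁·S_x(a₂)`
    (∀ a : C,
      heapMul k χ x (TensorProduct.map (heapAntipode k χ x) LinearMap.id
          (Coalgebra.comul (R := k) a)) = Coalgebra.counit (R := k) a • x ∧
      heapMul k χ x (TensorProduct.map LinearMap.id (heapAntipode k χ x)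
          (Coalgebra.comul (R := k) a)) = Coalgebra.counit (R := k) a • x) := by
  refine ⟨fun _ _ => heapMul_tmul _ _, fun a b c => hχ.assoc_br a x b x c,
    fun a => ⟨hχ.br_self_self_left hx a, hχ.br_self_self_right hx a⟩,
    hχ.comul_heapMul hx.1, hx.1, hχ.counit_heapMul hx.2, hx.2,
    fun a => ⟨hχ.heapMul_map_heapAntipode_id_comul hx a,
      hχ.heapMul_map_id_heapAntipode_comul hx a⟩⟩
end

section
/- Let H and G be Hopf heaps over a field k, let x ∈ H and x' ∈ G be group-like elements, and let f : H → G be a linear map. Then f is a Hopf heap homomorphism with f(x) = x' if and only if f is a Hopf algebra homomorphism from H_x(H) to H_{x'}(G), i.e. f is a coalgebra map satisfying f(x) = x' and f([a,x,b]) = [f(a),x',f(b)] for all a,b ∈ H. -/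
open TensorProduct

section AuxLemmas

variable {k : Type*} [Field k] {C : Type*} [AddCommGroup C] [Module k C] [Coalgebra k C]

lemma br_sum_left (χ : (C ⊗[k] (C ⊗[k] C)) →ₗ[k] C) {ι : Type*} (s : Finset ι)
    (A : ι → C) (c d : C) :
    br k χ (∑ i ∈ s, A i) c d = ∑ i ∈ s, br k χ (A i) c d := by
  simp [br, TensorProduct.sum_tmul, map_sum]

lemma br_sum_mid (χ : (C ⊗[k] (C ⊗[k] C)) →ₗ[k] C) {ι : Type*} (s : Finset ι)
    (a : C) (B : ι → C) (d : C) :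
    br k χ a (∑ i ∈ s, B i) d = ∑ i ∈ s, br k χ a (B i) d := by
  simp [br, TensorProduct.sum_tmul, TensorProduct.tmul_sum, map_sum]

lemma br_sum_right (χ : (C ⊗[k] (C ⊗[k] C)) →ₗ[k] C) {ι : Type*} (s : Finset ι)
    (a c : C) (D : ι → C) :
    br k χ a c (∑ i ∈ s, D i) = ∑ i ∈ s, br k χ a c (D i) := by
  simp [br, TensorProduct.tmul_sum, map_sum]

lemma br_smul_left (χ : (C ⊗[k] (C ⊗[k] C)) →ₗ[k] C) (t : k) (a c d : C) :
    br k χ (t • a) c d = t • br k χ a c d := by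
  rw [br, br, ← TensorProduct.smul_tmul', map_smul]

lemma br_smul_mid (χ : (C ⊗[k] (C ⊗[k] C)) →ₗ[k] C) (t : k) (a c d : C) :
    br k χ a (t • c) d = t • br k χ a c d := by
  rw [br, br, ← TensorProduct.smul_tmul', TensorProduct.tmul_smul, map_smul]

lemma br_smul_right (χ : (C ⊗[k] (C ⊗[k] C)) →ₗ[k] C) (t : k) (a c d : C) :
    br k χ a c (t • d) = t • br k χ a c d := by
  simp [br, TensorProduct.tmul_smul, map_smul]

lemma br_gl_left {χ : (C ⊗[k] (C ⊗[k] C)) →ₗ[k] C} (hC : IsHopfHeap k χ)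
    {x : C} (hx : IsGrouplike k x) (a : C) : br k χ x x a = a := by
  have h := hC.left_cancel x a
  rw [hx.1, hx.2] at h
  simpa [br] using h

lemma br_gl_right {χ : (C ⊗[k] (C ⊗[k] C)) →ₗ[k] C} (hC : IsHopfHeap k χ)
    {x : C} (hx : IsGrouplike k x) (a : C) : br k χ a x x = a := by
  have h := hC.right_cancel x a
  rw [hx.1, hx.2] at h
  simpa [br] using h

lemma br_repr_left {χ : (C ⊗[k] (C ⊗[k] C)) →ₗ[k] C} (hC : IsHopfHeap k χ)
    (b a : C) {ι : Type*} (r : Coalgebra.Repr k b ι) :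
    ∑ i ∈ r.index, br k χ (r.left i) (r.right i) a = Coalgebra.counit (R := k) b • a := by
  have h := hC.left_cancel b a
  rw [← r.eq] at h
  simpa [TensorProduct.sum_tmul, map_sum, br] using h

lemma br_decomp {χ : (C ⊗[k] (C ⊗[k] C)) →ₗ[k] C} (hC : IsHopfHeap k χ)
    {x : C} (hx : IsGrouplike k x) (a b c : C) :
    br k χ a b c = br k χ a x (br k χ (br k χ x b x) x c) := by
  have h1 : br k χ (br k χ x b x) x c = br k χ x b c := by
    rw [hC.assoc_br, br_gl_left hC hx]
  rw [h1, ← hC.assoc_br, br_gl_right hC hx]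

lemma sum_counit_left_smul {b : C} {ι : Type*} (r : Coalgebra.Repr k b ι) :
    ∑ i ∈ r.index, Coalgebra.counit (R := k) (r.left i) • r.right i = b := by
  have h := Coalgebra.rTensor_counit_comul (R := k) b
  rw [← r.eq, map_sum] at h
  have h2 := congrArg (TensorProduct.lid k C) h
  simp only [map_sum, LinearMap.rTensor_tmul, TensorProduct.lid_tmul, one_smul] at h2
  exact h2

lemma sum_counit_right_smul {b : C} {ι : Type*} (r : Coalgebra.Repr k b ι) :
    ∑ i ∈ r.index, Coalgebra.counit (R := k) (r.right i) • r.left i = b := by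
  have h := Coalgebra.lTensor_counit_comul (R := k) b
  rw [← r.eq, map_sum] at h
  have h2 := congrArg (TensorProduct.rid k C) h
  simp only [map_sum, LinearMap.lTensor_tmul, TensorProduct.rid_tmul, one_smul] at h2
  exact h2

end AuxLemmas

/-- `f` is a Hopf heap homomorphism with `f x = x'` iff `f` is a Hopf algebra
homomorphism `H_x(H) → H_{x'}(G)`, i.e. a coalgebra map with `f x = x'` and
`f [a,x,b] = [f a, x', f b]`. -/
theorem heapHom_iff_hopfAlgHom {k : Type*} [Field k] {H G : Type*}
    [AddCommGroup H] [Module k H] [Coalgebra k H]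
    [AddCommGroup G] [Module k G] [Coalgebra k G]
    (χH : (H ⊗[k] (H ⊗[k] H)) →ₗ[k] H) (hH : IsHopfHeap k χH)
    (χG : (G ⊗[k] (G ⊗[k] G)) →ₗ[k] G) (hG : IsHopfHeap k χG)
    (x : H) (hx : IsGrouplike k x) (x' : G) (hx' : IsGrouplike k x')
    (f : H →ₗ[k] G) :
    (IsHeapHom k χH χG f ∧ f x = x') ↔
      ((∀ a : H, Coalgebra.comul (R := k) (f a) =
          TensorProduct.map f f (Coalgebra.comul (R := k) a)) ∧
        (∀ a : H, Coalgebra.counit (R := k) (f a) = Coalgebra.counit (R := k) a) ∧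
        f x = x' ∧
        (∀ a b : H, f (br k χH a x b) = br k χG (f a) x' (f b))) := by
  constructor
  · rintro ⟨⟨ha, hb, hc⟩, hfx⟩
    exact ⟨ha, hb, hfx, fun a b => by rw [hc, hfx]⟩
  · rintro ⟨h1, h2, hfx, h4⟩
    refine ⟨⟨h1, h2, ?_⟩, hfx⟩
    -- fact1 : ∑ f(b₁) ·' f(S b₂) = ε(b) • x'
    have fact1 : ∀ (b : H) (r : Coalgebra.Repr k b (H × H)),
        ∑ i ∈ r.index, br k χG (f (r.left i)) x' (f (br k χH x (r.right i) x))
          = Coalgebra.counit (R := k) b • x' := by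
      intro b r
      have hterm : ∀ i, br k χG (f (r.left i)) x' (f (br k χH x (r.right i) x))
          = f (br k χH (r.left i) (r.right i) x) := by
        intro i
        rw [← h4, ← hH.assoc_br, br_gl_right hH hx]
      rw [Finset.sum_congr rfl (fun i _ => hterm i), ← map_sum,
        br_repr_left hH b x r, map_smul, hfx]
    -- fact3 : ∑ S'(f b₁) ·' f(b₂) = ε(b) • x'  (here already simplified to [x', f b₁, f b₂])
    have fact3 : ∀ (b : H) (r : Coalgebra.Repr k b (H × H)),
        ∑ i ∈ r.index, br k χG x' (f (r.left i)) (f (r.right i))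
          = Coalgebra.counit (R := k) b • x' := by
      intro b r
      have hm : (∑ i ∈ r.index, f (r.left i) ⊗ₜ[k] f (r.right i))
          = Coalgebra.comul (R := k) (f b) := by
        rw [h1, ← r.eq, map_sum]
        simp
      calc ∑ i ∈ r.index, br k χG x' (f (r.left i)) (f (r.right i))
          = χG (x' ⊗ₜ[k] ∑ i ∈ r.index, f (r.left i) ⊗ₜ[k] f (r.right i)) := by
            simp [br, TensorProduct.tmul_sum, map_sum]
        _ = χG (x' ⊗ₜ[k] Coalgebra.comul (R := k) (f b)) := by rw [hm]
        _ = Coalgebra.counit (R := k) (f b) • x' := hG.right_cancel (f b) x'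
        _ = Coalgebra.counit (R := k) b • x' := by rw [h2]
    -- key step: f preserves the antipode
    have hbr3 : ∀ g h : G, br k χG (br k χG x' g x') x' h = br k χG x' g h := by
      intro g h
      rw [hG.assoc_br, br_gl_left hG hx']
    have stepB : ∀ b : H, f (br k χH x b x) = br k χG x' (f b) x' := by
      intro b
      set r := Coalgebra.Repr.arbitrary k b with hr
      set r1 : ∀ i : H × H, Coalgebra.Repr k (r.left i) (H × H) :=
        fun i => Coalgebra.Repr.arbitrary k (r.left i) with hr1
      set r2 : ∀ i : H × H, Coalgebra.Repr k (r.right i) (H × H) :=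
        fun i => Coalgebra.Repr.arbitrary k (r.right i) with hr2
      have E := Coalgebra.sum_tmul_tmul_eq (R := k) r r1 r2
      -- the trilinear map  u ⊗ v ⊗ w ↦ (S'(f u) ·' f v) ·' f (S w)
      set T : H ⊗[k] (H ⊗[k] H) →ₗ[k] G :=
        (heapMul k χG x') ∘ₗ
          TensorProduct.map
            ((heapMul k χG x') ∘ₗ
              TensorProduct.map ((heapAntipode k χG x') ∘ₗ f) f)
            (f ∘ₗ ((heapAntipode k χH x)))
          ∘ₗ (TensorProduct.assoc k H H H).symm.toLinearMap with hTdef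
      have hT : ∀ u v w : H, T (u ⊗ₜ[k] (v ⊗ₜ[k] w)) =
          br k χG (br k χG (br k χG x' (f u) x') x' (f v)) x' (f (br k χH x w x)) := by
        intro u v w
        simp [hTdef, heapMul, heapAntipode, br]
      have EC := congrArg T E
      simp only [map_sum] at EC
      -- compute the left side
      have hL : ∀ i ∈ r.index,
          (∑ j ∈ (r1 i).index, T ((r1 i).left j ⊗ₜ[k] ((r1 i).right j ⊗ₜ[k] r.right i)))
            = Coalgebra.counit (R := k) (r.left i) • f (br k χH x (r.right i) x) := by
        intro i _
        have : ∀ j, T ((r1 i).left j ⊗ₜ[k] ((r1 i).right j ⊗ₜ[k] r.right i))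
            = br k χG (br k χG x' (f ((r1 i).left j)) (f ((r1 i).right j))) x'
                (f (br k χH x (r.right i) x)) := by
          intro j
          rw [hT, hbr3]
        rw [Finset.sum_congr rfl (fun j _ => this j), ← br_sum_left,
          fact3 (r.left i) (r1 i), br_smul_left, br_gl_left hG hx']
      have hR : ∀ i ∈ r.index,
          (∑ j ∈ (r2 i).index, T (r.left i ⊗ₜ[k] ((r2 i).left j ⊗ₜ[k] (r2 i).right j)))
            = Coalgebra.counit (R := k) (r.right i) • br k χG x' (f (r.left i)) x' := by
        intro i _
        have : ∀ j, T (r.left i ⊗ₜ[k] ((r2 i).left j ⊗ₜ[k] (r2 i).right j))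
            = br k χG (br k χG x' (f (r.left i)) x') x'
                (br k χG (f ((r2 i).left j)) x' (f (br k χH x ((r2 i).right j) x))) := by
          intro j
          rw [hT, hG.assoc_br]
        rw [Finset.sum_congr rfl (fun j _ => this j), ← br_sum_right,
          fact1 (r.right i) (r2 i), br_smul_right, br_gl_right hG hx']
      have EC2 := ((Finset.sum_congr rfl hL).symm.trans EC).trans (Finset.sum_congr rfl hR)
      calc f (br k χH x b x)
          = f (br k χH x (∑ i ∈ r.index,
              Coalgebra.counit (R := k) (r.left i) • r.right i) x) := by
            rw [sum_counit_left_smul r]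
        _ = ∑ i ∈ r.index, Coalgebra.counit (R := k) (r.left i)
              • f (br k χH x (r.right i) x) := by
            rw [br_sum_mid, map_sum]
            exact Finset.sum_congr rfl fun i _ => by rw [br_smul_mid, map_smul]
        _ = ∑ i ∈ r.index, Coalgebra.counit (R := k) (r.right i)
              • br k χG x' (f (r.left i)) x' := EC2
        _ = br k χG x' (f (∑ i ∈ r.index,
              Coalgebra.counit (R := k) (r.right i) • r.left i)) x' := by
            rw [map_sum, br_sum_mid]
            exact (Finset.sum_congr rfl fun i _ => by rw [map_smul, br_smul_mid]).symm
        _ = br k χG x' (f b) x' := by rw [sum_counit_right_smul r]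
    -- conclude
    intro a b c
    rw [br_decomp hH hx a b c, h4, h4, stepB, ← br_decomp hG hx']
end

section
/- Let H be a commutative Hopf heap over a field k. Then for all w,y,z,w',y',z',w'',y'',z'' ∈ H one has [[w,w',w''],[y,y',y''],[z,z',z'']] = [[w,y,z],[w',y',z'],[w'',y'',z'']]. -/
open TensorProduct

section ExchangeAux
set_option linter.unusedSectionVars false

open TensorProduct Coalgebra

variable {k : Type*} [Field k] {C : Type*} [AddCommGroup C]
    [Module k C] [Coalgebra k C] (χ : (C ⊗[k] (C ⊗[k] C)) →ₗ[k] C)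

lemma br_def (a b c : C) : br k χ a b c = χ (a ⊗ₜ[k] (b ⊗ₜ[k] c)) := rfl

lemma br_sum₁ {ι : Type*} (s : Finset ι) (f : ι → C) (b c : C) :
    br k χ (∑ i ∈ s, f i) b c = ∑ i ∈ s, br k χ (f i) b c := by
  simp [br, TensorProduct.sum_tmul, map_sum]

lemma br_sum₂ {ι : Type*} (s : Finset ι) (a : C) (f : ι → C) (c : C) :
    br k χ a (∑ i ∈ s, f i) c = ∑ i ∈ s, br k χ a (f i) c := by
  simp [br, TensorProduct.sum_tmul, TensorProduct.tmul_sum, map_sum]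

lemma br_sum₃ {ι : Type*} (s : Finset ι) (a b : C) (f : ι → C) :
    br k χ a b (∑ i ∈ s, f i) = ∑ i ∈ s, br k χ a b (f i) := by
  simp [br, TensorProduct.tmul_sum, map_sum]

lemma br_smul₁ (s : k) (a b c : C) : br k χ (s • a) b c = s • br k χ a b c := by
  show χ ((s • a) ⊗ₜ[k] (b ⊗ₜ[k] c)) = s • χ (a ⊗ₜ[k] (b ⊗ₜ[k] c))
  rw [← TensorProduct.smul_tmul', map_smul]

lemma br_smul₂ (s : k) (a b c : C) : br k χ a (s • b) c = s • br k χ a b c := by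
  show χ (a ⊗ₜ[k] ((s • b) ⊗ₜ[k] c)) = s • χ (a ⊗ₜ[k] (b ⊗ₜ[k] c))
  rw [← TensorProduct.smul_tmul', TensorProduct.tmul_smul, map_smul]

lemma br_smul₃ (s : k) (a b c : C) : br k χ a b (s • c) = s • br k χ a b c := by
  simp [br, TensorProduct.tmul_smul]

lemma cancel_right (hχ : IsHopfHeap k χ) {m : C} (x : C) (r : Coalgebra.Repr k m (C × C)) :
    ∑ i ∈ r.index, br k χ x (r.left i) (r.right i) = Coalgebra.counit (R := k) m • x := by
  have h : ∑ i ∈ r.index, br k χ x (r.left i) (r.right i)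
      = χ (x ⊗ₜ[k] (Coalgebra.comul (R := k) m)) := by
    rw [← r.eq, TensorProduct.tmul_sum, map_sum]
    rfl
  rw [h, hχ.right_cancel]

lemma cancel_left (hχ : IsHopfHeap k χ) {m : C} (x : C) (r : Coalgebra.Repr k m (C × C)) :
    ∑ i ∈ r.index, br k χ (r.left i) (r.right i) x = Coalgebra.counit (R := k) m • x := by
  have h : ∑ i ∈ r.index, br k χ (r.left i) (r.right i) x
      = χ ((TensorProduct.assoc k C C C) ((Coalgebra.comul (R := k) m) ⊗ₜ[k] x)) := by
    rw [← r.eq, TensorProduct.sum_tmul, map_sum, map_sum]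
    simp [br, TensorProduct.assoc_tmul]
  rw [h, hχ.left_cancel]

lemma sum_counit_smul {m : C} (r : Coalgebra.Repr k m (C × C)) :
    ∑ i ∈ r.index, Coalgebra.counit (R := k) (r.left i) • r.right i = m := by
  have h := Coalgebra.sum_counit_tmul_eq (R := k) r
  have h2 := congrArg (TensorProduct.lid k C) h
  simpa [map_sum, -Coalgebra.sum_counit_tmul_eq] using h2

lemma sum_smul_counit {m : C} (r : Coalgebra.Repr k m (C × C)) :
    ∑ i ∈ r.index, Coalgebra.counit (R := k) (r.right i) • r.left i = m := by
  have h := Coalgebra.sum_tmul_counit_eq (R := k) r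
  have h2 := congrArg (TensorProduct.rid k C) h
  simpa [map_sum, -Coalgebra.sum_tmul_counit_eq] using h2

lemma coassoc_sum (G : C ⊗[k] (C ⊗[k] C) →ₗ[k] C) {a : C} (r : Coalgebra.Repr k a (C × C))
    (r₁ : ∀ i : C × C, Coalgebra.Repr k (r.left i) (C × C))
    (r₂ : ∀ i : C × C, Coalgebra.Repr k (r.right i) (C × C)) :
    ∑ i ∈ r.index, ∑ j ∈ (r₁ i).index,
      G ((r₁ i).left j ⊗ₜ[k] ((r₁ i).right j ⊗ₜ[k] r.right i)) =
    ∑ i ∈ r.index, ∑ j ∈ (r₂ i).index,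
      G (r.left i ⊗ₜ[k] ((r₂ i).left j ⊗ₜ[k] (r₂ i).right j)) := by
  have h := Coalgebra.sum_tmul_tmul_eq (R := k) r r₁ r₂
  have h2 := congrArg G h
  simpa [map_sum] using h2

lemma comul_br_rep (hχ : IsHopfHeap k χ) {b c d : C}
    (rb : Coalgebra.Repr k b (C × C)) (rc : Coalgebra.Repr k c (C × C)) (rd : Coalgebra.Repr k d (C × C)) :
    Coalgebra.comul (R := k) (br k χ b c d) =
      ∑ i ∈ rb.index, ∑ j ∈ rc.index, ∑ l ∈ rd.index,
        (br k χ (rb.left i) (rc.right j) (rd.left l)) ⊗ₜ[k]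
          (br k χ (rb.right i) (rc.left j) (rd.right l)) := by
  rw [hχ.comul_br, ← rb.eq, ← rc.eq, ← rd.eq]
  rw [TensorProduct.sum_tmul, map_sum, map_sum]
  refine Finset.sum_congr rfl fun i _ => ?_
  rw [TensorProduct.sum_tmul, TensorProduct.tmul_sum, map_sum, map_sum]
  refine Finset.sum_congr rfl fun j _ => ?_
  rw [TensorProduct.tmul_sum, TensorProduct.tmul_sum, map_sum, map_sum]
  refine Finset.sum_congr rfl fun l _ => ?_
  simp [sweedlerShuffle, br, TensorProduct.tensorTensorTensorComm_tmul,
    TensorProduct.comm_tmul, TensorProduct.map_tmul]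

lemma I4L (hχ : IsHopfHeap k χ) {b c d : C} (e : C)
    (rb : Coalgebra.Repr k b (C × C)) (rc : Coalgebra.Repr k c (C × C)) (rd : Coalgebra.Repr k d (C × C)) :
    ∑ i ∈ rb.index, ∑ j ∈ rc.index, ∑ l ∈ rd.index,
      br k χ (br k χ (rb.left i) (rc.right j) (rd.left l))
        (br k χ (rb.right i) (rc.left j) (rd.right l)) e
    = (Coalgebra.counit (R := k) b * Coalgebra.counit (R := k) c *
        Coalgebra.counit (R := k) d) • e := by
  have hΦ : ∀ P Q : C,
      br k χ P Q e = (χ ∘ₗ (TensorProduct.assoc k C C C).toLinearMap ∘ₗ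
        ((TensorProduct.mk k (C ⊗[k] C) C).flip e)) (P ⊗ₜ[k] Q) := by
    intro P Q
    simp [br, TensorProduct.assoc_tmul]
  calc
    ∑ i ∈ rb.index, ∑ j ∈ rc.index, ∑ l ∈ rd.index,
      br k χ (br k χ (rb.left i) (rc.right j) (rd.left l))
        (br k χ (rb.right i) (rc.left j) (rd.right l)) e
      = (χ ∘ₗ (TensorProduct.assoc k C C C).toLinearMap ∘ₗ
          ((TensorProduct.mk k (C ⊗[k] C) C).flip e))
          (Coalgebra.comul (R := k) (br k χ b c d)) := by
        rw [comul_br_rep χ hχ rb rc rd]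
        simp only [map_sum]
        exact Finset.sum_congr rfl fun i _ => Finset.sum_congr rfl fun j _ =>
          Finset.sum_congr rfl fun l _ => hΦ _ _
    _ = Coalgebra.counit (R := k) (br k χ b c d) • e := by
        simpa using hχ.left_cancel (br k χ b c d) e
    _ = (Coalgebra.counit (R := k) b * Coalgebra.counit (R := k) c *
        Coalgebra.counit (R := k) d) • e := by rw [hχ.counit_br]

lemma L7 (hχ : IsHopfHeap k χ) (hcomm : ∀ x y z : C, br k χ x y z = br k χ z y x)
    (c d e : C) {b : C} (r : Coalgebra.Repr k b (C × C)) :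
    ∑ i ∈ r.index, br k χ (r.left i) (br k χ (r.right i) c d) e
      = Coalgebra.counit (R := k) b • br k χ c d e := by
  classical
  let rc : Coalgebra.Repr k c (C × C) := Coalgebra.Repr.arbitrary k c
  let rc₁ : ∀ j : C × C, Coalgebra.Repr k (rc.left j) (C × C) :=
    fun j => Coalgebra.Repr.arbitrary k _
  let rc₂ : ∀ j : C × C, Coalgebra.Repr k (rc.right j) (C × C) :=
    fun j => Coalgebra.Repr.arbitrary k _
  let rd : Coalgebra.Repr k d (C × C) := Coalgebra.Repr.arbitrary k d
  let rd₁ : ∀ l : C × C, Coalgebra.Repr k (rd.left l) (C × C) :=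
    fun l => Coalgebra.Repr.arbitrary k _
  let rd₂ : ∀ l : C × C, Coalgebra.Repr k (rd.right l) (C × C) :=
    fun l => Coalgebra.Repr.arbitrary k _
  -- generalized coassociativity transport for the c-legs
  have keyc : ∀ x y : C,
      (∑ j ∈ rc.index, ∑ q ∈ (rc₂ j).index,
        br k χ (br k χ x (br k χ y (rc.left j) d) e)
          ((rc₂ j).left q) ((rc₂ j).right q)) =
      ∑ j ∈ rc.index, ∑ q ∈ (rc₁ j).index,
        br k χ (br k χ x (br k χ y ((rc₁ j).left q) d) e)
          ((rc₁ j).right q) (rc.right j) := by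
    intro x y
    set G : C ⊗[k] (C ⊗[k] C) →ₗ[k] C :=
      χ ∘ₗ TensorProduct.map
        (χ ∘ₗ TensorProduct.mk k C (C ⊗[k] C) x ∘ₗ (TensorProduct.mk k C C).flip e ∘ₗ
          χ ∘ₗ TensorProduct.mk k C (C ⊗[k] C) y ∘ₗ (TensorProduct.mk k C C).flip d)
        LinearMap.id with hGdef
    have hG : ∀ u v w : C, G (u ⊗ₜ[k] (v ⊗ₜ[k] w))
        = br k χ (br k χ x (br k χ y u d) e) v w := by
      intro u v w
      simp [hGdef, br, TensorProduct.map_tmul, TensorProduct.mk_apply,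
        LinearMap.flip_apply]
    calc
      (∑ j ∈ rc.index, ∑ q ∈ (rc₂ j).index,
        br k χ (br k χ x (br k χ y (rc.left j) d) e)
          ((rc₂ j).left q) ((rc₂ j).right q))
        = ∑ j ∈ rc.index, ∑ q ∈ (rc₂ j).index,
            G (rc.left j ⊗ₜ[k] ((rc₂ j).left q ⊗ₜ[k] (rc₂ j).right q)) :=
          Finset.sum_congr rfl fun j _ => Finset.sum_congr rfl fun q _ => (hG _ _ _).symm
      _ = ∑ j ∈ rc.index, ∑ q ∈ (rc₁ j).index,
            G ((rc₁ j).left q ⊗ₜ[k] ((rc₁ j).right q ⊗ₜ[k] rc.right j)) :=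
          (coassoc_sum G rc rc₁ rc₂).symm
      _ = ∑ j ∈ rc.index, ∑ q ∈ (rc₁ j).index,
            br k χ (br k χ x (br k χ y ((rc₁ j).left q) d) e)
              ((rc₁ j).right q) (rc.right j) :=
          Finset.sum_congr rfl fun j _ => Finset.sum_congr rfl fun q _ => hG _ _ _
  -- generalized coassociativity transport for the d-legs
  have keyd : ∀ z y₂ x₁ x₂ y₁ : C,
      (∑ l ∈ rd.index, ∑ t ∈ (rd₁ l).index,
        br k χ (br k χ z ((rd₁ l).left t) ((rd₁ l).right t)) y₂
          (br k χ x₁ (br k χ x₂ y₁ (rd.right l)) e)) =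
      ∑ l ∈ rd.index, ∑ t ∈ (rd₂ l).index,
        br k χ (br k χ z (rd.left l) ((rd₂ l).left t)) y₂
          (br k χ x₁ (br k χ x₂ y₁ ((rd₂ l).right t)) e) := by
    intro z y₂ x₁ x₂ y₁
    set G : C ⊗[k] (C ⊗[k] C) →ₗ[k] C :=
      χ ∘ₗ TensorProduct.map
        (χ ∘ₗ TensorProduct.mk k C (C ⊗[k] C) z)
        (TensorProduct.mk k C C y₂ ∘ₗ
          χ ∘ₗ TensorProduct.mk k C (C ⊗[k] C) x₁ ∘ₗ (TensorProduct.mk k C C).flip e ∘ₗ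
          χ ∘ₗ TensorProduct.mk k C (C ⊗[k] C) x₂ ∘ₗ TensorProduct.mk k C C y₁) ∘ₗ
        (TensorProduct.assoc k C C C).symm.toLinearMap with hGdef
    have hG : ∀ p q' w : C, G (p ⊗ₜ[k] (q' ⊗ₜ[k] w))
        = br k χ (br k χ z p q') y₂ (br k χ x₁ (br k χ x₂ y₁ w) e) := by
      intro p q' w
      simp [hGdef, br, TensorProduct.map_tmul, TensorProduct.mk_apply,
        LinearMap.flip_apply, TensorProduct.assoc_symm_tmul]
    calc
      (∑ l ∈ rd.index, ∑ t ∈ (rd₁ l).index,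
        br k χ (br k χ z ((rd₁ l).left t) ((rd₁ l).right t)) y₂
          (br k χ x₁ (br k χ x₂ y₁ (rd.right l)) e))
        = ∑ l ∈ rd.index, ∑ t ∈ (rd₁ l).index,
            G ((rd₁ l).left t ⊗ₜ[k] ((rd₁ l).right t ⊗ₜ[k] rd.right l)) :=
          Finset.sum_congr rfl fun l _ => Finset.sum_congr rfl fun t _ => (hG _ _ _).symm
      _ = ∑ l ∈ rd.index, ∑ t ∈ (rd₂ l).index,
            G (rd.left l ⊗ₜ[k] ((rd₂ l).left t ⊗ₜ[k] (rd₂ l).right t)) :=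
          coassoc_sum G rd rd₁ rd₂
      _ = ∑ l ∈ rd.index, ∑ t ∈ (rd₂ l).index,
            br k χ (br k χ z (rd.left l) ((rd₂ l).left t)) y₂
              (br k χ x₁ (br k χ x₂ y₁ ((rd₂ l).right t)) e) :=
          Finset.sum_congr rfl fun l _ => Finset.sum_congr rfl fun t _ => hG _ _ _
  calc
    ∑ i ∈ r.index, br k χ (r.left i) (br k χ (r.right i) c d) e
      = ∑ i ∈ r.index, ∑ j ∈ rc.index, ∑ q ∈ (rc₂ j).index,
          br k χ (br k χ (r.left i) (br k χ (r.right i) (rc.left j) d) e)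
            ((rc₂ j).left q) ((rc₂ j).right q) := by
        refine Finset.sum_congr rfl fun i _ => ?_
        calc
          br k χ (r.left i) (br k χ (r.right i) c d) e
            = br k χ (r.left i) (br k χ (r.right i)
                (∑ j ∈ rc.index, Coalgebra.counit (R := k) (rc.right j) • rc.left j) d) e := by
              rw [sum_smul_counit rc]
          _ = ∑ j ∈ rc.index, Coalgebra.counit (R := k) (rc.right j) •
                br k χ (r.left i) (br k χ (r.right i) (rc.left j) d) e := by
              simp only [br_sum₂, br_smul₂]
          _ = ∑ j ∈ rc.index, ∑ q ∈ (rc₂ j).index,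
                br k χ (br k χ (r.left i) (br k χ (r.right i) (rc.left j) d) e)
                  ((rc₂ j).left q) ((rc₂ j).right q) :=
              Finset.sum_congr rfl fun j _ => (cancel_right χ hχ _ (rc₂ j)).symm
    _ = ∑ i ∈ r.index, ∑ j ∈ rc.index, ∑ q ∈ (rc₁ j).index,
          br k χ (br k χ (r.left i) (br k χ (r.right i) ((rc₁ j).left q) d) e)
            ((rc₁ j).right q) (rc.right j) :=
        Finset.sum_congr rfl fun i _ => keyc _ _
    _ = ∑ i ∈ r.index, ∑ j ∈ rc.index, ∑ q ∈ (rc₁ j).index,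
          br k χ (rc.right j) ((rc₁ j).right q)
            (br k χ (r.left i) (br k χ (r.right i) ((rc₁ j).left q) d) e) :=
        Finset.sum_congr rfl fun i _ => Finset.sum_congr rfl fun j _ =>
          Finset.sum_congr rfl fun q _ => hcomm _ _ _
    _ = ∑ i ∈ r.index, ∑ j ∈ rc.index, ∑ q ∈ (rc₁ j).index,
          ∑ l ∈ rd.index, ∑ t ∈ (rd₁ l).index,
          br k χ (br k χ (rc.right j) ((rd₁ l).left t) ((rd₁ l).right t))
            ((rc₁ j).right q)
            (br k χ (r.left i) (br k χ (r.right i) ((rc₁ j).left q) (rd.right l)) e) := by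
        refine Finset.sum_congr rfl fun i _ => Finset.sum_congr rfl fun j _ =>
          Finset.sum_congr rfl fun q _ => ?_
        calc
          br k χ (rc.right j) ((rc₁ j).right q)
              (br k χ (r.left i) (br k χ (r.right i) ((rc₁ j).left q) d) e)
            = br k χ (rc.right j) ((rc₁ j).right q)
                (br k χ (r.left i) (br k χ (r.right i) ((rc₁ j).left q)
                  (∑ l ∈ rd.index, Coalgebra.counit (R := k) (rd.left l) • rd.right l)) e) := by
              rw [_root_.sum_counit_smul rd]
          _ = ∑ l ∈ rd.index, Coalgebra.counit (R := k) (rd.left l) •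
                br k χ (rc.right j) ((rc₁ j).right q)
                  (br k χ (r.left i) (br k χ (r.right i) ((rc₁ j).left q) (rd.right l)) e) := by
              simp only [br_sum₂, br_sum₃, br_smul₂, br_smul₃]
          _ = ∑ l ∈ rd.index,
                br k χ (Coalgebra.counit (R := k) (rd.left l) • rc.right j) ((rc₁ j).right q)
                  (br k χ (r.left i) (br k χ (r.right i) ((rc₁ j).left q) (rd.right l)) e) := by
              simp only [br_smul₁]
          _ = ∑ l ∈ rd.index, ∑ t ∈ (rd₁ l).index,
                br k χ (br k χ (rc.right j) ((rd₁ l).left t) ((rd₁ l).right t))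
                  ((rc₁ j).right q)
                  (br k χ (r.left i) (br k χ (r.right i) ((rc₁ j).left q) (rd.right l)) e) := by
              refine Finset.sum_congr rfl fun l _ => ?_
              rw [← cancel_right χ hχ (rc.right j) (rd₁ l), br_sum₁]
    _ = ∑ i ∈ r.index, ∑ j ∈ rc.index, ∑ q ∈ (rc₁ j).index,
          ∑ l ∈ rd.index, ∑ t ∈ (rd₂ l).index,
          br k χ (br k χ (rc.right j) (rd.left l) ((rd₂ l).left t))
            ((rc₁ j).right q)
            (br k χ (r.left i) (br k χ (r.right i) ((rc₁ j).left q) ((rd₂ l).right t)) e) :=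
        Finset.sum_congr rfl fun i _ => Finset.sum_congr rfl fun j _ =>
          Finset.sum_congr rfl fun q _ => keyd _ _ _ _ _
    _ = ∑ i ∈ r.index, ∑ j ∈ rc.index, ∑ q ∈ (rc₁ j).index,
          ∑ l ∈ rd.index, ∑ t ∈ (rd₂ l).index,
          br k χ (rc.right j) (rd.left l)
            (br k χ (br k χ (r.left i) ((rc₁ j).right q) ((rd₂ l).left t))
              (br k χ (r.right i) ((rc₁ j).left q) ((rd₂ l).right t)) e) := by
        refine Finset.sum_congr rfl fun i _ => Finset.sum_congr rfl fun j _ =>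
          Finset.sum_congr rfl fun q _ => Finset.sum_congr rfl fun l _ =>
          Finset.sum_congr rfl fun t _ => ?_
        rw [hχ.assoc_br, ← hχ.assoc_br ((rd₂ l).left t) ((rc₁ j).right q) (r.left i),
          hcomm ((rd₂ l).left t) ((rc₁ j).right q) (r.left i)]
    _ = ∑ j ∈ rc.index, ∑ l ∈ rd.index, ∑ i ∈ r.index, ∑ q ∈ (rc₁ j).index,
          ∑ t ∈ (rd₂ l).index,
          br k χ (rc.right j) (rd.left l)
            (br k χ (br k χ (r.left i) ((rc₁ j).right q) ((rd₂ l).left t))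
              (br k χ (r.right i) ((rc₁ j).left q) ((rd₂ l).right t)) e) := by
        rw [Finset.sum_comm]
        exact Finset.sum_congr rfl fun j _ =>
          (Finset.sum_congr rfl fun i _ => Finset.sum_comm).trans Finset.sum_comm
    _ = ∑ j ∈ rc.index, ∑ l ∈ rd.index,
          br k χ (rc.right j) (rd.left l)
            ((Coalgebra.counit (R := k) b * Coalgebra.counit (R := k) (rc.left j) *
              Coalgebra.counit (R := k) (rd.right l)) • e) := by
        refine Finset.sum_congr rfl fun j _ => Finset.sum_congr rfl fun l _ => ?_
        simp only [← br_sum₃]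
        rw [I4L χ hχ e r (rc₁ j) (rd₂ l)]
    _ = ∑ j ∈ rc.index, ∑ l ∈ rd.index, Coalgebra.counit (R := k) b •
          br k χ (Coalgebra.counit (R := k) (rc.left j) • rc.right j)
            (Coalgebra.counit (R := k) (rd.right l) • rd.left l) e := by
        refine Finset.sum_congr rfl fun j _ => Finset.sum_congr rfl fun l _ => ?_
        rw [br_smul₃, br_smul₁, br_smul₂, smul_smul, smul_smul, mul_assoc]
    _ = Coalgebra.counit (R := k) b •
          ∑ j ∈ rc.index, ∑ l ∈ rd.index,
            br k χ (Coalgebra.counit (R := k) (rc.left j) • rc.right j)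
              (Coalgebra.counit (R := k) (rd.right l) • rd.left l) e :=
        (Finset.sum_congr rfl fun j _ => (Finset.smul_sum).symm).trans (Finset.smul_sum).symm
    _ = Coalgebra.counit (R := k) b • br k χ c d e := by
        congr 1
        calc
          ∑ j ∈ rc.index, ∑ l ∈ rd.index,
            br k χ (Coalgebra.counit (R := k) (rc.left j) • rc.right j)
              (Coalgebra.counit (R := k) (rd.right l) • rd.left l) e
            = ∑ j ∈ rc.index,
                br k χ (Coalgebra.counit (R := k) (rc.left j) • rc.right j)
                  (∑ l ∈ rd.index, Coalgebra.counit (R := k) (rd.right l) • rd.left l) e := by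
              refine Finset.sum_congr rfl fun j _ => ?_
              rw [br_sum₂ χ]
          _ = ∑ j ∈ rc.index,
                br k χ (Coalgebra.counit (R := k) (rc.left j) • rc.right j) d e := by
              rw [sum_smul_counit rd]
          _ = br k χ (∑ j ∈ rc.index, Coalgebra.counit (R := k) (rc.left j) • rc.right j) d e := by
              rw [br_sum₁ χ]
          _ = br k χ c d e := by rw [_root_.sum_counit_smul rc]

lemma Mmid (hχ : IsHopfHeap k χ) (hcomm : ∀ x y z : C, br k χ x y z = br k χ z y x)
    (e b c d a : C) :
    br k χ e (br k χ b c d) a = br k χ e b (br k χ c d a) := by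
  classical
  let r : Coalgebra.Repr k b (C × C) := Coalgebra.Repr.arbitrary k b
  let r₁ : ∀ i : C × C, Coalgebra.Repr k (r.left i) (C × C) :=
    fun i => Coalgebra.Repr.arbitrary k _
  let r₂ : ∀ i : C × C, Coalgebra.Repr k (r.right i) (C × C) :=
    fun i => Coalgebra.Repr.arbitrary k _
  set G : C ⊗[k] (C ⊗[k] C) →ₗ[k] C :=
    χ ∘ₗ TensorProduct.map
      (χ ∘ₗ TensorProduct.mk k C (C ⊗[k] C) e)
      ((TensorProduct.mk k C C).flip a ∘ₗ χ ∘ₗ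
        (TensorProduct.mk k C (C ⊗[k] C)).flip (c ⊗ₜ[k] d)) ∘ₗ
      (TensorProduct.assoc k C C C).symm.toLinearMap with hGdef
  have hG : ∀ u v w : C, G (u ⊗ₜ[k] (v ⊗ₜ[k] w))
      = br k χ (br k χ e u v) (br k χ w c d) a := by
    intro u v w
    simp [hGdef, br, TensorProduct.map_tmul, TensorProduct.mk_apply,
      LinearMap.flip_apply, TensorProduct.assoc_symm_tmul]
  calc
    br k χ e (br k χ b c d) a
      = br k χ e (br k χ (∑ i ∈ r.index,
          Coalgebra.counit (R := k) (r.left i) • r.right i) c d) a := by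
        rw [_root_.sum_counit_smul r]
    _ = ∑ i ∈ r.index, Coalgebra.counit (R := k) (r.left i) •
          br k χ e (br k χ (r.right i) c d) a := by
        simp only [br_sum₁, br_sum₂, br_smul₁, br_smul₂]
    _ = ∑ i ∈ r.index,
          br k χ (Coalgebra.counit (R := k) (r.left i) • e)
            (br k χ (r.right i) c d) a := by
        simp only [br_smul₁]
    _ = ∑ i ∈ r.index, ∑ q ∈ (r₁ i).index,
          br k χ (br k χ e ((r₁ i).left q) ((r₁ i).right q))
            (br k χ (r.right i) c d) a := by
        refine Finset.sum_congr rfl fun i _ => ?_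
        rw [← cancel_right χ hχ e (r₁ i), br_sum₁]
    _ = ∑ i ∈ r.index, ∑ q ∈ (r₁ i).index,
          G ((r₁ i).left q ⊗ₜ[k] ((r₁ i).right q ⊗ₜ[k] r.right i)) :=
        Finset.sum_congr rfl fun i _ => Finset.sum_congr rfl fun q _ => (hG _ _ _).symm
    _ = ∑ i ∈ r.index, ∑ q ∈ (r₂ i).index,
          G (r.left i ⊗ₜ[k] ((r₂ i).left q ⊗ₜ[k] (r₂ i).right q)) :=
        coassoc_sum G r r₁ r₂
    _ = ∑ i ∈ r.index, ∑ q ∈ (r₂ i).index,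
          br k χ (br k χ e (r.left i) ((r₂ i).left q))
            (br k χ ((r₂ i).right q) c d) a :=
        Finset.sum_congr rfl fun i _ => Finset.sum_congr rfl fun q _ => hG _ _ _
    _ = ∑ i ∈ r.index, ∑ q ∈ (r₂ i).index,
          br k χ e (r.left i)
            (br k χ ((r₂ i).left q) (br k χ ((r₂ i).right q) c d) a) :=
        Finset.sum_congr rfl fun i _ => Finset.sum_congr rfl fun q _ =>
          hχ.assoc_br _ _ _ _ _
    _ = ∑ i ∈ r.index,
          br k χ e (r.left i)
            (Coalgebra.counit (R := k) (r.right i) • br k χ c d a) := by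
        refine Finset.sum_congr rfl fun i _ => ?_
        rw [← L7 χ hχ hcomm c d a (r₂ i), br_sum₃]
    _ = ∑ i ∈ r.index, Coalgebra.counit (R := k) (r.right i) •
          br k χ e (r.left i) (br k χ c d a) := by
        simp only [br_smul₃]
    _ = br k χ e (∑ i ∈ r.index,
          Coalgebra.counit (R := k) (r.right i) • r.left i) (br k χ c d a) := by
        simp only [br_sum₂, br_smul₂]
    _ = br k χ e b (br k χ c d a) := by rw [sum_smul_counit r]

lemma midBreak (hχ : IsHopfHeap k χ) (hcomm : ∀ x y z : C, br k χ x y z = br k χ z y x)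
    (a b c d e : C) :
    br k χ a (br k χ b c d) e = br k χ (br k χ a d c) b e := by
  rw [hcomm a _ e, Mmid χ hχ hcomm e b c d a, hcomm c d a, hcomm e b _]

end ExchangeAux
/-- in a commutative Hopf heap,
`[[w,w',w''],[y,y',y''],[z,z',z'']] = [[w,y,z],[w',y',z'],[w'',y'',z'']]`. -/
theorem commutative_hopfHeap_exchange {k : Type*} [Field k] {C : Type*} [AddCommGroup C]
    [Module k C] [Coalgebra k C] (χ : (C ⊗[k] (C ⊗[k] C)) →ₗ[k] C)
    (hχ : IsHopfHeap k χ) (hcomm : ∀ x y z : C, br k χ x y z = br k χ z y x) :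
    ∀ w y z w' y' z' w'' y'' z'' : C,
      br k χ (br k χ w w' w'') (br k χ y y' y'') (br k χ z z' z'') =
        br k χ (br k χ w y z) (br k χ w' y' z') (br k χ w'' y'' z'') := by
  intro w y z w' y' z' w'' y'' z''
  have M := midBreak χ hχ hcomm
  have A := hχ.assoc_br
  calc
    br k χ (br k χ w w' w'') (br k χ y y' y'') (br k χ z z' z'')
        = br k χ (br k χ (br k χ w w' w'') (br k χ y y' y'') z) z' z'' :=
      (A (br k χ w w' w'') (br k χ y y' y'') z z' z'').symm
    _ = br k χ (br k χ w w' w'') (br k χ z' z (br k χ y y' y'')) z'' :=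
      (M (br k χ w w' w'') z' z (br k χ y y' y'') z'').symm
    _ = br k χ w (br k χ (br k χ z' z (br k χ y y' y'')) w'' w') z'' :=
      (M w (br k χ z' z (br k χ y y' y'')) w'' w' z'').symm
    _ = br k χ w (br k χ (br k χ (br k χ z' z y) y' y'') w'' w') z'' := by
      rw [← A z' z y y' y'']
    _ = br k χ w (br k χ (br k χ z' z y) y' (br k χ y'' w'' w')) z'' := by
      rw [A (br k χ z' z y) y' y'' w'' w']
    _ = br k χ w (br k χ (br k χ y'' w'' w') y' (br k χ z' z y)) z'' := by
      rw [hcomm (br k χ z' z y) y' (br k χ y'' w'' w')]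
    _ = br k χ (br k χ w (br k χ z' z y) y') (br k χ y'' w'' w') z'' :=
      M w (br k χ y'' w'' w') y' (br k χ z' z y) z''
    _ = br k χ (br k χ (br k χ w (br k χ z' z y) y') w' w'') y'' z'' :=
      M (br k χ w (br k χ z' z y) y') y'' w'' w' z''
    _ = br k χ (br k χ w (br k χ z' z y) y') w' (br k χ w'' y'' z'') :=
      A (br k χ w (br k χ z' z y) y') w' w'' y'' z''
    _ = br k χ (br k χ (br k χ w y z) z' y') w' (br k χ w'' y'' z'') := by
      rw [M w z' z y y']
    _ = br k χ (br k χ w y z) (br k χ w' y' z') (br k χ w'' y'' z'') :=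
      (M (br k χ w y z) w' y' z' (br k χ w'' y'' z'')).symm
end

section
/- Let H be a Hopf heap over a field k, let G be a commutative Hopf heap over k, let f : H → G be a coalgebra map, let x ∈ H be group-like and x' ∈ G be group-like. Then f is a Hopf heap homomorphism if and only if the composite τ^{x'}_{f(x)} ∘ f : H → G is a Hopf heap homomorphism, where τ^{x'}_{f(x)}(c) = [c, f(x), x'] for c ∈ G (note f(x) is group-like since f is a coalgebra map). -/
open TensorProduct

noncomputable section AuxHH

variable {k : Type*} [Field k] {G : Type*} [AddCommGroup G] [Module k G] [Coalgebra k G]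

variable (χ : (G ⊗[k] (G ⊗[k] G)) →ₗ[k] G)

/-- Right translation `c ↦ [c,u,v]`. -/
def trMap (u v : G) : G →ₗ[k] G :=
  χ ∘ₗ ((TensorProduct.mk k G (G ⊗[k] G)).flip (u ⊗ₜ[k] v))

lemma trMap_apply (u v c : G) : trMap χ u v c = br k χ c u v := rfl

/-- `c ↦ [u,c,v]`. -/
def sandMap (u v : G) : G →ₗ[k] G :=
  χ ∘ₗ (TensorProduct.mk k G (G ⊗[k] G) u) ∘ₗ ((TensorProduct.mk k G G).flip v)

lemma sandMap_apply (u v c : G) : sandMap χ u v c = br k χ u c v := rfl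

lemma heapMul_apply (y a b : G) : heapMul k χ y (a ⊗ₜ[k] b) = br k χ a y b := rfl

variable {χ}

lemma gl_left (hG : IsHopfHeap k χ) {y : G} (hy : IsGrouplike k y) (a : G) :
    br k χ y y a = a := by
  have h := hG.left_cancel y a
  rw [hy.1, hy.2] at h
  simpa [br, TensorProduct.assoc_tmul] using h

lemma gl_right (hG : IsHopfHeap k χ) {y : G} (hy : IsGrouplike k y) (a : G) :
    br k χ a y y = a := by
  have h := hG.right_cancel y a
  rw [hy.1, hy.2] at h
  simpa [br] using h

lemma trMap_trMap (hG : IsHopfHeap k χ) {u v : G} (hu : IsGrouplike k u)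
    (hv : IsGrouplike k v) (c : G) : trMap χ v u (trMap χ u v c) = c := by
  rw [trMap_apply, trMap_apply, hG.assoc_br, gl_left hG hv, gl_right hG hu]

lemma shuffle_const (u v : G) (t : G ⊗[k] G) :
    TensorProduct.map χ χ (sweedlerShuffle k G G G G G G
        (t ⊗ₜ[k] ((u ⊗ₜ[k] u) ⊗ₜ[k] (v ⊗ₜ[k] v)))) =
      TensorProduct.map (trMap χ u v) (trMap χ u v) t := by
  induction t with
  | zero => simp
  | tmul a b =>
      simp [sweedlerShuffle, trMap, br, TensorProduct.tensorTensorTensorComm_tmul]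
  | add s t hs ht =>
      rw [TensorProduct.add_tmul, map_add, map_add, map_add, hs, ht]

lemma comul_trMap (hG : IsHopfHeap k χ) {u v : G} (hu : IsGrouplike k u)
    (hv : IsGrouplike k v) (c : G) :
    Coalgebra.comul (R := k) (trMap χ u v c) =
      TensorProduct.map (trMap χ u v) (trMap χ u v) (Coalgebra.comul (R := k) c) := by
  have h := hG.comul_br c u v
  rw [hu.1, hv.1] at h
  rw [trMap_apply, h, shuffle_const]

lemma counit_trMap (hG : IsHopfHeap k χ) {u v : G} (hu : IsGrouplike k u)
    (hv : IsGrouplike k v) (c : G) :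
    Coalgebra.counit (R := k) (trMap χ u v c) = Coalgebra.counit (R := k) c := by
  rw [trMap_apply, hG.counit_br, hu.2, hv.2, mul_one, mul_one]

/-- Convolution product with respect to the multiplication `a ⊗ b ↦ [a,y,b]`. -/
def convMap (χ : (G ⊗[k] (G ⊗[k] G)) →ₗ[k] G) (y : G) (F F' : G →ₗ[k] G) : G →ₗ[k] G :=
  heapMul k χ y ∘ₗ TensorProduct.map F F' ∘ₗ Coalgebra.comul

/-- The convolution unit `B ↦ ε(B) • y`. -/
def unitMap (y : G) : G →ₗ[k] G :=
  (LinearMap.toSpanSingleton k G y) ∘ₗ (Coalgebra.counit (R := k))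

lemma unitMap_apply (y B : G) :
    (unitMap y : G →ₗ[k] G) B = Coalgebra.counit (R := k) B • y := rfl

lemma conv_unit_left (hG : IsHopfHeap k χ) {y : G} (hy : IsGrouplike k y)
    (F : G →ₗ[k] G) : convMap χ y (unitMap y) F = F := by
  ext B
  have key : ∀ t : G ⊗[k] G,
      heapMul k χ y (TensorProduct.map (unitMap y) F t) =
        F ((TensorProduct.lid k G) (LinearMap.rTensor G (Coalgebra.counit (R := k)) t)) := by
    intro t
    induction t with
    | zero => simp
    | tmul a b =>
        rw [TensorProduct.map_tmul, unitMap_apply, ← TensorProduct.smul_tmul',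
          map_smul, heapMul_apply, gl_left hG hy, LinearMap.rTensor_tmul,
          TensorProduct.lid_tmul, map_smul]
    | add s t hs ht => simp only [map_add, hs, ht]
  simp only [convMap, LinearMap.comp_apply, key, Coalgebra.rTensor_counit_comul,
    TensorProduct.lid_tmul, one_smul]

lemma conv_unit_right (hG : IsHopfHeap k χ) {y : G} (hy : IsGrouplike k y)
    (F : G →ₗ[k] G) : convMap χ y F (unitMap y) = F := by
  ext B
  have key : ∀ t : G ⊗[k] G,
      heapMul k χ y (TensorProduct.map F (unitMap y) t) =
        F ((TensorProduct.rid k G) (LinearMap.lTensor G (Coalgebra.counit (R := k)) t)) := by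
    intro t
    induction t with
    | zero => simp
    | tmul a b =>
        rw [TensorProduct.map_tmul, unitMap_apply, TensorProduct.tmul_smul,
          map_smul, heapMul_apply, gl_right hG hy, LinearMap.lTensor_tmul,
          TensorProduct.rid_tmul, map_smul]
    | add s t hs ht => simp only [map_add, hs, ht]
  simp only [convMap, LinearMap.comp_apply, key, Coalgebra.lTensor_counit_comul,
    TensorProduct.rid_tmul, one_smul]

lemma mu_assoc (hG : IsHopfHeap k χ) (y : G) :
    (heapMul k χ y ∘ₗ TensorProduct.map LinearMap.id (heapMul k χ y)) ∘ₗ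
        (TensorProduct.assoc k G G G).toLinearMap =
      heapMul k χ y ∘ₗ TensorProduct.map (heapMul k χ y) LinearMap.id := by
  apply TensorProduct.ext_threefold
  intro a b c
  simp only [LinearMap.comp_apply, LinearEquiv.coe_coe, TensorProduct.assoc_tmul,
    TensorProduct.map_tmul, LinearMap.id_coe, id_eq, heapMul_apply]
  exact (hG.assoc_br a y b y c).symm

lemma conv_assoc (hG : IsHopfHeap k χ) (y : G) (F F' F'' : G →ₗ[k] G) :
    convMap χ y (convMap χ y F F') F'' = convMap χ y F (convMap χ y F' F'') := by
  have h1 : TensorProduct.map (heapMul k χ y ∘ₗ TensorProduct.map F F' ∘ₗ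
        Coalgebra.comul (R := k)) F'' =
      TensorProduct.map (heapMul k χ y ∘ₗ TensorProduct.map F F') F'' ∘ₗ
        LinearMap.rTensor G (Coalgebra.comul (R := k)) := by
    apply TensorProduct.ext'
    intro b c
    simp only [LinearMap.comp_apply, TensorProduct.map_tmul, LinearMap.rTensor_tmul]
  have h2 : TensorProduct.map F (heapMul k χ y ∘ₗ TensorProduct.map F' F'' ∘ₗ
        Coalgebra.comul (R := k)) =
      TensorProduct.map F (heapMul k χ y ∘ₗ TensorProduct.map F' F'') ∘ₗ
        LinearMap.lTensor G (Coalgebra.comul (R := k)) := by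
    apply TensorProduct.ext'
    intro b c
    simp only [LinearMap.comp_apply, TensorProduct.map_tmul, LinearMap.lTensor_tmul]
  have h3 : TensorProduct.map F (heapMul k χ y ∘ₗ TensorProduct.map F' F'') =
      (TensorProduct.map LinearMap.id (heapMul k χ y)) ∘ₗ
        TensorProduct.map F (TensorProduct.map F' F'') := by
    rw [← TensorProduct.map_comp, LinearMap.id_comp]
  have h6 : TensorProduct.map (heapMul k χ y) LinearMap.id ∘ₗ
        TensorProduct.map (TensorProduct.map F F') F'' =
      TensorProduct.map (heapMul k χ y ∘ₗ TensorProduct.map F F') F'' := by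
    rw [← TensorProduct.map_comp, LinearMap.id_comp]
  ext B
  simp only [convMap, LinearMap.comp_apply]
  rw [LinearMap.congr_fun h1 (Coalgebra.comul (R := k) B),
      LinearMap.congr_fun h2 (Coalgebra.comul (R := k) B)]
  simp only [LinearMap.comp_apply]
  rw [← Coalgebra.coassoc_apply (R := k) B, h3]
  simp only [LinearMap.comp_apply]
  rw [TensorProduct.map_map_assoc F F' F'']
  have h5 := LinearMap.congr_fun (mu_assoc hG y)
    (TensorProduct.map (TensorProduct.map F F') F''
      ((LinearMap.rTensor G (Coalgebra.comul (R := k))) (Coalgebra.comul (R := k) B)))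
  simp only [LinearMap.comp_apply, LinearEquiv.coe_coe] at h5 ⊢
  rw [h5, ← LinearMap.comp_apply (TensorProduct.map (heapMul k χ y) LinearMap.id), h6]

/-- Key antipode identity: `[y,[B,z,y],y] = [z,B,y]` for group-like `y, z`. -/
lemma antipode_sandwich (hG : IsHopfHeap k χ) {y z : G} (hy : IsGrouplike k y)
    (hz : IsGrouplike k z) (B : G) :
    br k χ y (br k χ B z y) y = br k χ z B y := by
  set T : G →ₗ[k] G := trMap χ z y with hT
  set Fm : G →ₗ[k] G := sandMap χ y y ∘ₗ T with hFm
  set Gm : G →ₗ[k] G := sandMap χ z y with hGm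
  have h1 : convMap χ y Gm T = unitMap y := by
    ext B'
    have key : heapMul k χ y ∘ₗ TensorProduct.map Gm T =
        T ∘ₗ (χ ∘ₗ TensorProduct.mk k G (G ⊗[k] G) z) := by
      apply TensorProduct.ext'
      intro b₁ b₂
      simp only [LinearMap.comp_apply, TensorProduct.map_tmul, heapMul_apply,
        TensorProduct.mk_apply, hGm, hT, sandMap_apply, trMap_apply]
      have e1 : br k χ (br k χ z b₁ y) y (br k χ b₂ z y) =
          br k χ z b₁ (br k χ y y (br k χ b₂ z y)) := hG.assoc_br z b₁ y y _
      rw [e1, gl_left hG hy, ← hG.assoc_br]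
      rfl
    simp only [convMap, LinearMap.comp_apply]
    rw [show heapMul k χ y (TensorProduct.map Gm T (Coalgebra.comul (R := k) B')) =
        T (χ (z ⊗ₜ[k] Coalgebra.comul (R := k) B')) from LinearMap.congr_fun key _]
    rw [hG.right_cancel B' z, map_smul, hT, trMap_apply, gl_left hG hz, unitMap_apply]
  have h2 : convMap χ y T Fm = unitMap y := by
    ext B'
    have key : heapMul k χ y ∘ₗ TensorProduct.map T Fm =
        (χ ∘ₗ (TensorProduct.assoc k G G G).toLinearMap ∘ₗ
          ((TensorProduct.mk k (G ⊗[k] G) G).flip y)) ∘ₗ TensorProduct.map T T := by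
      apply TensorProduct.ext'
      intro b₁ b₂
      simp only [LinearMap.comp_apply, TensorProduct.map_tmul, heapMul_apply,
        LinearMap.flip_apply, TensorProduct.mk_apply, LinearEquiv.coe_coe,
        TensorProduct.assoc_tmul, hFm, hT, sandMap_apply, trMap_apply]
      have e1 : br k χ (br k χ (br k χ b₁ z y) y y) (br k χ b₂ z y) y =
          br k χ (br k χ b₁ z y) y (br k χ y (br k χ b₂ z y) y) :=
        hG.assoc_br (br k χ b₁ z y) y y _ _
      rw [← e1, gl_right hG hy]
      rfl
    simp only [convMap, LinearMap.comp_apply]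
    rw [show heapMul k χ y (TensorProduct.map T Fm (Coalgebra.comul (R := k) B')) =
        χ ((TensorProduct.assoc k G G G)
          ((TensorProduct.map T T (Coalgebra.comul (R := k) B')) ⊗ₜ[k] y)) from
        LinearMap.congr_fun key _]
    rw [← comul_trMap hG hz hy, hG.left_cancel, counit_trMap hG hz hy, unitMap_apply]
  have hFG : Fm = Gm := by
    calc Fm = convMap χ y (unitMap y) Fm := (conv_unit_left hG hy Fm).symm
      _ = convMap χ y (convMap χ y Gm T) Fm := by rw [h1]
      _ = convMap χ y Gm (convMap χ y T Fm) := conv_assoc hG y Gm T Fm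
      _ = convMap χ y Gm (unitMap y) := by rw [h2]
      _ = Gm := conv_unit_right hG hy Gm
  have := LinearMap.congr_fun hFG B
  simpa only [hFm, hGm, hT, LinearMap.comp_apply, sandMap_apply, trMap_apply] using this

/-- Middle-slot rule: `[A,[M,z,y],D] = [A,y,[z,M,D]]` for group-like `y, z`. -/
lemma br_mid (hG : IsHopfHeap k χ) {y z : G} (hy : IsGrouplike k y)
    (hz : IsGrouplike k z) (A M D : G) :
    br k χ A (br k χ M z y) D = br k χ A y (br k χ z M D) := by
  have p1 := antipode_sandwich hG hy hz M
  have s1 : br k χ A (br k χ M z y) D =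
      br k χ (br k χ A (br k χ M z y) y) y D := by
    rw [hG.assoc_br, gl_left hG hy]
  have s2 : br k χ A (br k χ M z y) y =
      br k χ A y (br k χ y (br k χ M z y) y) := by
    rw [← hG.assoc_br, gl_right hG hy]
  rw [s1, s2, p1, hG.assoc_br, hG.assoc_br, gl_left hG hy]

lemma tr_br_aux (hG : IsHopfHeap k χ) {y z : G} (hy : IsGrouplike k y)
    (hz : IsGrouplike k z) (A B D : G) :
    br k χ (br k χ A y z) (br k χ B y z) D = br k χ A B D := by
  have h := br_mid hG hy hz A (br k χ B y z) D
  rw [hG.assoc_br, gl_left hG hz, gl_right hG hy] at h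
  rw [hG.assoc_br]
  exact h.symm

/-- Translations by group-likes preserve the bracket. -/
lemma tr_br (hG : IsHopfHeap k χ) {y z : G} (hy : IsGrouplike k y)
    (hz : IsGrouplike k z) (A B C : G) :
    br k χ (br k χ A y z) (br k χ B y z) (br k χ C y z) =
      br k χ (br k χ A B C) y z := by
  rw [tr_br_aux hG hy hz, hG.assoc_br]

end AuxHH

/-- for a coalgebra map `f : H → G` into a commutative Hopf heap `G`,
`f` is a Hopf heap homomorphism iff `τ^{x'}_{f(x)} ∘ f` is a Hopf heap homomorphism,
where `τ^{x'}_{f(x)}(c) = [c, f x, x']`. -/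
theorem heapHom_iff_translation_heapHom {k : Type*} [Field k] {H G : Type*}
    [AddCommGroup H] [Module k H] [Coalgebra k H]
    [AddCommGroup G] [Module k G] [Coalgebra k G]
    (χH : (H ⊗[k] (H ⊗[k] H)) →ₗ[k] H) (hH : IsHopfHeap k χH)
    (χG : (G ⊗[k] (G ⊗[k] G)) →ₗ[k] G) (hG : IsHopfHeap k χG)
    (hGcomm : ∀ a b c : G, br k χG a b c = br k χG c b a)
    (f : H →ₗ[k] G)
    (hf1 : ∀ a : H, Coalgebra.comul (R := k) (f a) =
      TensorProduct.map f f (Coalgebra.comul (R := k) a))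
    (hf2 : ∀ a : H, Coalgebra.counit (R := k) (f a) = Coalgebra.counit (R := k) a)
    (x : H) (hx : IsGrouplike k x) (x' : G) (hx' : IsGrouplike k x') :
    IsHeapHom k χH χG f ↔
      IsHeapHom k χH χG
        ((χG ∘ₗ ((TensorProduct.mk k G (G ⊗[k] G)).flip ((f x) ⊗ₜ[k] x'))) ∘ₗ f) := by
  have hy : IsGrouplike k (f x) := by
    constructor
    · rw [hf1, hx.1, TensorProduct.map_tmul]
    · rw [hf2, hx.2]
  have hτ : (χG ∘ₗ ((TensorProduct.mk k G (G ⊗[k] G)).flip ((f x) ⊗ₜ[k] x'))) =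
      trMap χG (f x) x' := rfl
  rw [hτ]
  set τ : G →ₗ[k] G := trMap χG (f x) x' with hτdef
  constructor
  · rintro ⟨h1, h2, h3⟩
    refine ⟨?_, ?_, ?_⟩
    · intro a
      simp only [LinearMap.comp_apply]
      rw [comul_trMap hG hy hx', hf1]
      have hmc := LinearMap.congr_fun (TensorProduct.map_comp (f₂ := τ) (f₁ := f) (g₂ := τ) (g₁ := f))
        (Coalgebra.comul (R := k) a)
      simp only [LinearMap.comp_apply] at hmc
      exact hmc.symm
    · intro a
      simp only [LinearMap.comp_apply]
      rw [counit_trMap hG hy hx', hf2]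
    · intro a b c
      simp only [LinearMap.comp_apply]
      rw [h3, hτdef, trMap_apply, ← tr_br hG hy hx']
      rfl
  · rintro ⟨g1, g2, g3⟩
    refine ⟨hf1, hf2, ?_⟩
    intro a b c
    have key : ∀ w : H, f w = br k χG ((τ ∘ₗ f) w) x' (f x) := by
      intro w
      have := trMap_trMap hG hy hx' (f w)
      rw [← this]
      rfl
    rw [key (br k χH a b c)]
    have hg3 := g3 a b c
    rw [hg3]
    rw [← tr_br hG hx' hy ((τ ∘ₗ f) a) ((τ ∘ₗ f) b) ((τ ∘ₗ f) c)]
    rw [← key a, ← key b, ← key c]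
end

section
/- Let G be a Hopf algebra over a field k with antipode S_G and unit 1_G, let H be a commutative Hopf algebra over k with antipode S_H, and let f : G → H be a coalgebra map. Then f satisfies f(a·S_G(b)·c) = f(a)·S_H(f(b))·f(c) for all a,b,c ∈ G if and only if the map g : G → H, g(x) = f(x)·S_H(f(1_G)), is a Hopf algebra homomorphism (i.e. g is a unital algebra map and a coalgebra map). -/
open TensorProduct

section Aux

open Coalgebra HopfAlgebra


variable {k : Type*} [Field k]

lemma myGrouplike_mul_antipode {A : Type*} [Semiring A] [HopfAlgebra k A] {x : A}
    (h1 : Coalgebra.comul (R := k) x = x ⊗ₜ[k] x)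
    (h2 : Coalgebra.counit (R := k) x = 1) :
    x * HopfAlgebra.antipode (R := k) x = 1 ∧ HopfAlgebra.antipode (R := k) x * x = 1 := by
  constructor
  · have h := mul_antipode_lTensor_comul_apply (R := k) x
    rw [h1, h2] at h
    simpa using h
  · have h := mul_antipode_rTensor_comul_apply (R := k) x
    rw [h1, h2] at h
    simpa using h

lemma myAntipode_one {A : Type*} [Semiring A] [HopfAlgebra k A] :
    HopfAlgebra.antipode (R := k) (1 : A) = 1 := by
  have h := (myGrouplike_mul_antipode (k := k) (x := (1 : A))
    (by rw [Bialgebra.comul_one, Algebra.TensorProduct.one_def]) Bialgebra.counit_one).2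
  simpa using h

lemma myComul_antipode_grouplike {H : Type*} [CommRing H] [HopfAlgebra k H] {x : H}
    (h1 : Coalgebra.comul (R := k) x = x ⊗ₜ[k] x)
    (h2 : Coalgebra.counit (R := k) x = 1) :
    Coalgebra.comul (R := k) (HopfAlgebra.antipode (R := k) x) =
      HopfAlgebra.antipode (R := k) x ⊗ₜ[k] HopfAlgebra.antipode (R := k) x ∧
    Coalgebra.counit (R := k) (HopfAlgebra.antipode (R := k) x) = 1 := by
  obtain ⟨hx1, hx2⟩ := myGrouplike_mul_antipode h1 h2
  constructor
  · have e1 : Coalgebra.comul (R := k) (HopfAlgebra.antipode (R := k) x) * (x ⊗ₜ[k] x) = 1 := by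
      rw [← h1, ← Bialgebra.comul_mul, hx2, Bialgebra.comul_one]
    calc Coalgebra.comul (R := k) (HopfAlgebra.antipode (R := k) x)
        = Coalgebra.comul (R := k) (HopfAlgebra.antipode (R := k) x) *
            ((x ⊗ₜ[k] x) *
              (HopfAlgebra.antipode (R := k) x ⊗ₜ[k] HopfAlgebra.antipode (R := k) x)) := by
          rw [Algebra.TensorProduct.tmul_mul_tmul, hx1, ← Algebra.TensorProduct.one_def, mul_one]
      _ = _ := by rw [← mul_assoc, e1, one_mul]
  · have h : Coalgebra.counit (R := k) (HopfAlgebra.antipode (R := k) x) *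
        Coalgebra.counit (R := k) x = 1 := by
      rw [← Bialgebra.counit_mul, hx2, Bialgebra.counit_one]
    rwa [h2, mul_one] at h

lemma mySum_counit_smul_left {C : Type*} [AddCommGroup C] [Module k C] [Coalgebra k C]
    {ι : Type*} {b : C} (r : Coalgebra.Repr k b ι) :
    ∑ i ∈ r.index, Coalgebra.counit (R := k) (r.right i) • r.left i = b := by
  calc ∑ i ∈ r.index, Coalgebra.counit (R := k) (r.right i) • r.left i
      = TensorProduct.rid k C
          (∑ i ∈ r.index, r.left i ⊗ₜ[k] Coalgebra.counit (R := k) (r.right i)) := by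
        rw [map_sum]
        exact Finset.sum_congr rfl fun i _ => (TensorProduct.rid_tmul _ _).symm
    _ = TensorProduct.rid k C (b ⊗ₜ[k] 1) := by rw [sum_tmul_counit_eq r]
    _ = b := by simp

lemma mySum_counit_smul_right {C : Type*} [AddCommGroup C] [Module k C] [Coalgebra k C]
    {ι : Type*} {b : C} (r : Coalgebra.Repr k b ι) :
    ∑ i ∈ r.index, Coalgebra.counit (R := k) (r.left i) • r.right i = b := by
  calc ∑ i ∈ r.index, Coalgebra.counit (R := k) (r.left i) • r.right i
      = TensorProduct.lid k C
          (∑ i ∈ r.index, Coalgebra.counit (R := k) (r.left i) ⊗ₜ[k] r.right i) := by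
        rw [map_sum]
        exact Finset.sum_congr rfl fun i _ => (TensorProduct.lid_tmul _ _).symm
    _ = TensorProduct.lid k C (1 ⊗ₜ[k] b) := by rw [sum_counit_tmul_eq r]
    _ = b := by simp

variable {G H : Type*} [Ring G] [HopfAlgebra k G] [CommRing H] [HopfAlgebra k H]

lemma mySum_map_mul_antipode (f : G →ₗ[k] H)
    (hf1 : ∀ a : G, Coalgebra.comul (R := k) (f a) =
      TensorProduct.map f f (Coalgebra.comul (R := k) a))
    (hf2 : ∀ a : G, Coalgebra.counit (R := k) (f a) = Coalgebra.counit (R := k) a)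
    {ι : Type*} {b : G} (r : Coalgebra.Repr k b ι) :
    ∑ i ∈ r.index, f (r.left i) * HopfAlgebra.antipode (R := k) (f (r.right i))
      = algebraMap k H (Coalgebra.counit (R := k) b) := by
  have hr : (∑ i ∈ r.index, f (r.left i) ⊗ₜ[k] f (r.right i)) =
      CoalgebraStruct.comul (R := k) (f b) := by
    have := r.eq
    rw [show CoalgebraStruct.comul (R := k) (f b) = Coalgebra.comul (R := k) (f b) from rfl,
      hf1 b, ← this, map_sum]
    simp
  have h := sum_mul_antipode_eq_algebraMap_counit (R := k)
    (⟨r.index, fun i => f (r.left i), fun i => f (r.right i), hr⟩ : Coalgebra.Repr k (f b) ι)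
  rw [hf2] at h
  exact h

lemma myConv_apply (p q : G →ₗ[k] H) {ι : Type*} {b : G} (rp : Coalgebra.Repr k b ι) :
    (LinearMap.mul' k H) (TensorProduct.map p q (Coalgebra.comul (R := k) b)) =
      ∑ i ∈ rp.index, p (rp.left i) * q (rp.right i) := by
  rw [show Coalgebra.comul (R := k) b = CoalgebraStruct.comul (R := k) b from rfl, ← rp.eq,
    map_sum, map_sum]
  exact Finset.sum_congr rfl fun i _ => by simp

lemma myConv_inv_unique (p q r : G →ₗ[k] H)
    (hpq : ∀ b : G, (LinearMap.mul' k H) (TensorProduct.map p q (Coalgebra.comul (R := k) b)) =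
        algebraMap k H (Coalgebra.counit (R := k) b))
    (hqr : ∀ b : G, (LinearMap.mul' k H) (TensorProduct.map q r (Coalgebra.comul (R := k) b)) =
        algebraMap k H (Coalgebra.counit (R := k) b))
    (b : G) : p b = r b := by
  classical
  have r0 : Coalgebra.Repr k b (G × G) := Coalgebra.Repr.arbitrary k b
  have a₁ : ∀ i : G × G, Coalgebra.Repr k (r0.left i) (G × G) := fun i => Coalgebra.Repr.arbitrary k _
  have a₂ : ∀ i : G × G, Coalgebra.Repr k (r0.right i) (G × G) := fun i => Coalgebra.Repr.arbitrary k _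
  have key := Coalgebra.sum_tmul_tmul_eq (R := k) r0 a₁ a₂
  set Φ : G ⊗[k] (G ⊗[k] G) →ₗ[k] H :=
    LinearMap.mul' k H ∘ₗ TensorProduct.map p (LinearMap.mul' k H ∘ₗ TensorProduct.map q r)
    with hΦdef
  have hΦ : ∀ x y z : G, Φ (x ⊗ₜ[k] (y ⊗ₜ[k] z)) = p x * (q y * r z) := by
    intro x y z
    simp [hΦdef, LinearMap.mul'_apply]
  apply_fun Φ at key
  simp only [map_sum, hΦ] at key
  have hL : ∑ i ∈ r0.index, ∑ j ∈ (a₁ i).index,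
      p ((a₁ i).left j) * (q ((a₁ i).right j) * r (r0.right i)) = r b := by
    calc ∑ i ∈ r0.index, ∑ j ∈ (a₁ i).index,
        p ((a₁ i).left j) * (q ((a₁ i).right j) * r (r0.right i))
        = ∑ i ∈ r0.index, (∑ j ∈ (a₁ i).index,
            p ((a₁ i).left j) * q ((a₁ i).right j)) * r (r0.right i) := by
          simp [Finset.sum_mul, mul_assoc]
      _ = ∑ i ∈ r0.index,
            algebraMap k H (Coalgebra.counit (R := k) (r0.left i)) * r (r0.right i) := by
          refine Finset.sum_congr rfl fun i _ => ?_
          rw [← myConv_apply p q (a₁ i), hpq (r0.left i)]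
      _ = ∑ i ∈ r0.index, Coalgebra.counit (R := k) (r0.left i) • r (r0.right i) := by
          refine Finset.sum_congr rfl fun i _ => ?_
          rw [Algebra.smul_def]
      _ = r (∑ i ∈ r0.index, Coalgebra.counit (R := k) (r0.left i) • r0.right i) := by
          rw [map_sum]
          exact Finset.sum_congr rfl fun i _ => (map_smul r _ _).symm
      _ = r b := by rw [mySum_counit_smul_right r0]
  have hR : ∑ i ∈ r0.index, ∑ j ∈ (a₂ i).index,
      p (r0.left i) * (q ((a₂ i).left j) * r ((a₂ i).right j)) = p b := by
    calc ∑ i ∈ r0.index, ∑ j ∈ (a₂ i).index,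
        p (r0.left i) * (q ((a₂ i).left j) * r ((a₂ i).right j))
        = ∑ i ∈ r0.index, p (r0.left i) * (∑ j ∈ (a₂ i).index,
            q ((a₂ i).left j) * r ((a₂ i).right j)) := by
          simp [Finset.mul_sum]
      _ = ∑ i ∈ r0.index,
            p (r0.left i) * algebraMap k H (Coalgebra.counit (R := k) (r0.right i)) := by
          refine Finset.sum_congr rfl fun i _ => ?_
          rw [← myConv_apply q r (a₂ i), hqr (r0.right i)]
      _ = ∑ i ∈ r0.index, Coalgebra.counit (R := k) (r0.right i) • p (r0.left i) := by
          refine Finset.sum_congr rfl fun i _ => ?_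
          rw [mul_comm, Algebra.smul_def]
      _ = p (∑ i ∈ r0.index, Coalgebra.counit (R := k) (r0.right i) • r0.left i) := by
          rw [map_sum]
          exact Finset.sum_congr rfl fun i _ => (map_smul p _ _).symm
      _ = p b := by rw [mySum_counit_smul_left r0]
  rw [hL, hR] at key
  exact key.symm

end Aux

lemma myMulAntipodeMap {k : Type*} [Field k] {G H : Type*} [Ring G] [HopfAlgebra k G]
    [CommRing H] [HopfAlgebra k H] (f : G →ₗ[k] H)
    (hf1 : ∀ a : G, Coalgebra.comul (R := k) (f a) =
      TensorProduct.map f f (Coalgebra.comul (R := k) a))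
    (hf2 : ∀ a : G, Coalgebra.counit (R := k) (f a) = Coalgebra.counit (R := k) a)
    (b : G) :
    (LinearMap.mul' k H) (TensorProduct.map f (HopfAlgebra.antipode (R := k) ∘ₗ f)
      (Coalgebra.comul (R := k) b)) = algebraMap k H (Coalgebra.counit (R := k) b) := by
  have hmap : TensorProduct.map f (HopfAlgebra.antipode (R := k) ∘ₗ f)
        (Coalgebra.comul (R := k) b)
      = (HopfAlgebra.antipode (R := k)).lTensor H
          (TensorProduct.map f f (Coalgebra.comul (R := k) b)) := by
    induction (Coalgebra.comul (R := k) b) using TensorProduct.induction_on with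
    | zero => simp
    | tmul x y => simp
    | add x y hx hy => simp only [map_add, hx, hy]
  rw [hmap, ← hf1, HopfAlgebra.mul_antipode_lTensor_comul_apply, hf2]

/-- The map `g : G → H`, `g(a) = f(a) · S_H(f(1))`. -/
noncomputable def translateF {k : Type*} [Field k] {G H : Type*} [Ring G] [HopfAlgebra k G]
    [CommRing H] [HopfAlgebra k H] (f : G →ₗ[k] H) : G →ₗ[k] H :=
  (LinearMap.mulRight k (HopfAlgebra.antipode (R := k) (f 1))) ∘ₗ f


section Aux2

open Coalgebra HopfAlgebra

variable {k : Type*} [Field k] {G H : Type*} [Ring G] [HopfAlgebra k G]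
  [CommRing H] [HopfAlgebra k H]

lemma myTranslateF_apply (f : G →ₗ[k] H) (x : G) :
    translateF f x = f x * HopfAlgebra.antipode (R := k) (f 1) := rfl

end Aux2

/-- a coalgebra map `f : G → H` into a commutative Hopf algebra `H` satisfies
`f(a·S(b)·c) = f(a)·S(f(b))·f(c)` iff `g : a ↦ f(a)·S(f(1))` is a Hopf algebra homomorphism. -/
theorem heapHom_iff_translate_is_hopfAlgHom {k : Type*} [Field k] {G H : Type*}
    [Ring G] [HopfAlgebra k G] [CommRing H] [HopfAlgebra k H]
    (f : G →ₗ[k] H)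
    (hf1 : ∀ a : G, Coalgebra.comul (R := k) (f a) =
      TensorProduct.map f f (Coalgebra.comul (R := k) a))
    (hf2 : ∀ a : G, Coalgebra.counit (R := k) (f a) = Coalgebra.counit (R := k) a) :
    (∀ a b c : G, f (a * HopfAlgebra.antipode (R := k) b * c) =
        f a * HopfAlgebra.antipode (R := k) (f b) * f c) ↔
      (translateF f 1 = 1 ∧
        (∀ a b : G, translateF f (a * b) = translateF f a * translateF f b) ∧
        (∀ a : G, Coalgebra.comul (R := k) (translateF f a) =
          TensorProduct.map (translateF f) (translateF f) (Coalgebra.comul (R := k) a)) ∧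
        (∀ a : G, Coalgebra.counit (R := k) (translateF f a) =
          Coalgebra.counit (R := k) a)) := by
  have u1 : Coalgebra.comul (R := k) (f 1) = f 1 ⊗ₜ[k] f 1 := by
    rw [hf1 1, Bialgebra.comul_one, Algebra.TensorProduct.one_def]
    simp
  have u2 : Coalgebra.counit (R := k) (f 1) = 1 := by rw [hf2 1, Bialgebra.counit_one]
  obtain ⟨hus, hsu⟩ := myGrouplike_mul_antipode u1 u2
  obtain ⟨hcs, hεs⟩ := myComul_antipode_grouplike u1 u2
  constructor
  · intro hheap
    refine ⟨?_, ?_, ?_, ?_⟩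
    · rw [myTranslateF_apply]
      exact hus
    · intro a b
      have hab := hheap a 1 b
      rw [myAntipode_one (k := k) (A := G), mul_one] at hab
      rw [myTranslateF_apply, myTranslateF_apply, myTranslateF_apply, hab]
      ring
    · intro a
      rw [myTranslateF_apply, Bialgebra.comul_mul, hcs, hf1]
      induction (Coalgebra.comul (R := k) a) using TensorProduct.induction_on with
      | zero => simp
      | tmul x y => simp [Algebra.TensorProduct.tmul_mul_tmul, myTranslateF_apply]
      | add x y hx hy => simp only [map_add, add_mul, hx, hy]
    · intro a
      rw [myTranslateF_apply, Bialgebra.counit_mul, hεs, mul_one, hf2]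
  · rintro ⟨g1, gmul, _gcomul, _gcounit⟩
    intro a b c
    have fx : ∀ x : G, f x = translateF f x * f 1 := by
      intro x
      rw [myTranslateF_apply, mul_assoc, hsu, mul_one]
    have galg : ∀ r : k, translateF f (algebraMap k G r) = algebraMap k H r := by
      intro r
      rw [Algebra.algebraMap_eq_smul_one, map_smul, g1, Algebra.algebraMap_eq_smul_one]
    have hpq : ∀ x : G, (LinearMap.mul' k H)
        (TensorProduct.map
          (LinearMap.mulRight k (HopfAlgebra.antipode (R := k) (f 1)) ∘ₗ
            (translateF f ∘ₗ HopfAlgebra.antipode (R := k))) f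
          (Coalgebra.comul (R := k) x)) =
        algebraMap k H (Coalgebra.counit (R := k) x) := by
      intro x
      have rp : Coalgebra.Repr k x (G × G) := Coalgebra.Repr.arbitrary k x
      rw [myConv_apply _ _ rp]
      have e : ∀ i : G × G,
          (LinearMap.mulRight k (HopfAlgebra.antipode (R := k) (f 1)) ∘ₗ
            (translateF f ∘ₗ HopfAlgebra.antipode (R := k))) (rp.left i) * f (rp.right i) =
          translateF f (HopfAlgebra.antipode (R := k) (rp.left i) * rp.right i) := by
        intro i
        simp only [LinearMap.coe_comp, Function.comp_apply, LinearMap.mulRight_apply]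
        rw [fx (rp.right i), mul_mul_mul_comm, hsu, mul_one, ← gmul]
      calc ∑ i ∈ rp.index,
          (LinearMap.mulRight k (HopfAlgebra.antipode (R := k) (f 1)) ∘ₗ
            (translateF f ∘ₗ HopfAlgebra.antipode (R := k))) (rp.left i) * f (rp.right i)
          = ∑ i ∈ rp.index,
              translateF f (HopfAlgebra.antipode (R := k) (rp.left i) * rp.right i) :=
            Finset.sum_congr rfl fun i _ => e i
        _ = translateF f (∑ i ∈ rp.index,
              HopfAlgebra.antipode (R := k) (rp.left i) * rp.right i) := (map_sum _ _ _).symm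
        _ = translateF f (algebraMap k G (Coalgebra.counit (R := k) x)) := by
            rw [HopfAlgebra.sum_antipode_mul_eq_algebraMap_counit rp]
        _ = algebraMap k H (Coalgebra.counit (R := k) x) := galg _
    have hSf : ∀ x : G,
        translateF f (HopfAlgebra.antipode (R := k) x) * HopfAlgebra.antipode (R := k) (f 1) =
          HopfAlgebra.antipode (R := k) (f x) := by
      intro x
      have h := myConv_inv_unique
        (LinearMap.mulRight k (HopfAlgebra.antipode (R := k) (f 1)) ∘ₗ
          (translateF f ∘ₗ HopfAlgebra.antipode (R := k))) f
        (HopfAlgebra.antipode (R := k) ∘ₗ f) hpq (myMulAntipodeMap f hf1 hf2) x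
      simpa using h
    have h1 : f (a * HopfAlgebra.antipode (R := k) b * c) =
        translateF f a * translateF f (HopfAlgebra.antipode (R := k) b) *
          translateF f c * f 1 := by
      rw [fx (a * HopfAlgebra.antipode (R := k) b * c), gmul, gmul]
    have hring : ∀ x y z u' s' : H, u' * s' = 1 →
        (x * u') * (y * s') * (z * u') = x * y * z * u' := by
      intro x y z u' s' h
      calc (x * u') * (y * s') * (z * u') = x * y * z * (u' * s' * u') := by ring
        _ = x * y * z * u' := by rw [h, one_mul]
    rw [h1, fx a, fx c, ← hSf b]
    exact (hring (translateF f a) (translateF f (HopfAlgebra.antipode (R := k) b))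
      (translateF f c) (f 1) (HopfAlgebra.antipode (R := k) (f 1)) hus).symm
end

section
/- Let (H,·,∘,σ) be a Hopf truss over a field k, with (H,·,1,Δ,ε,S) the underlying Hopf algebra, and let x ∈ H be group-like. Define a ·_x b := a·S(x)·b and σ_x(a) := a∘x. Then (H,·_x) is a Hopf algebra with unit x and antipode S_x(a) = x·S(a)·x, σ_x is a coalgebra endomorphism of H, and (H,·_x,∘,σ_x) is a Hopf truss: a∘(b ·_x c) = (a₁∘b) ·_x S_x(σ_x(a₂)) ·_x (a₃∘c), i.e. a∘(b·S(x)·c) = (a₁∘b)·S(a₂∘x)·(a₃∘c) for all a,b,c ∈ H. -/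
open TensorProduct

/-!
In the convolution algebra `Hom(H, H)` the truss law reads `T (b * c) = T b * (S ∘ σ * T c)`
with `T b = (· ∘ b)`. Since `σₓ = T x` is a coalgebra map, `S ∘ σₓ * σₓ = 1`, and expanding
`T c = T (x * (S x * c))` by the truss law gives `S ∘ σₓ * T c = S ∘ σ * T (S x * c)`; the truss
law at `(b, S x * c)` is therefore the translated one. The Hopf algebra axioms for `·ₓ` come from
`x * S x = S x * x = 1` and `S x` being group-like.
-/

open Coalgebra HopfAlgebra WithConv
open LinearMap (mul' mulLeft mulRight)

theorem IsGrouplike.isGroupLikeElem {k C : Type*} [Field k] [AddCommGroup C] [Module k C]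
    [Coalgebra k C] {x : C} (hx : IsGrouplike k x) : IsGroupLikeElem k x :=
  ⟨hx.2, hx.1⟩

section Translate

variable {R H : Type*} [CommSemiring R] [Semiring H] [HopfAlgebra R H] {x : H}

theorem mul'_comp_map_mulRight_id_tmul (g a b : H) :
    (mul' R H ∘ₗ map (mulRight R g) .id) (a ⊗ₜ b) = a * g * b := rfl

theorem mul_tmul_mul_eq_map_tensorTensorTensorComm (g h : H) (t s : H ⊗[R] H) :
    t * (g ⊗ₜ h) * s =
      map (mul' R H ∘ₗ map (mulRight R g) .id)
        (mul' R H ∘ₗ map (mulRight R h) .id)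
        (tensorTensorTensorComm R H H H H (t ⊗ₜ s)) := by
  induction t with
  | zero => simp
  | add t₁ t₂ h₁ h₂ => simp only [add_mul, add_tmul, map_add, h₁, h₂]
  | tmul u v =>
    induction s with
    | zero => simp
    | add s₁ s₂ h₁ h₂ => simp only [mul_add, tmul_add, map_add, h₁, h₂]
    | tmul p q => simp [Algebra.TensorProduct.tmul_mul_tmul]

theorem IsGroupLikeElem.translated_mul_antipode_rTensor_comul (hx : IsGroupLikeElem R x) (a : H) :
    (mul' R H ∘ₗ TensorProduct.map (mulRight R (antipode R x)) .id)
        (TensorProduct.map (mulLeft R x ∘ₗ mulRight R x ∘ₗ antipode R) .id (comul a)) =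
      counit (R := R) a • x := by
  have hcancel (r : H) : x * (antipode R x * r) = r := by
    rw [← mul_assoc, hx.mul_antipode_cancel, one_mul]
  rw [← (ℛ R a).eq]
  simp [map_sum, mul_assoc, hcancel, ← Finset.mul_sum, sum_antipode_mul_eq_smul]

theorem IsGroupLikeElem.translated_mul_antipode_lTensor_comul (hx : IsGroupLikeElem R x) (a : H) :
    (mul' R H ∘ₗ TensorProduct.map (mulRight R (antipode R x)) .id)
        (TensorProduct.map .id (mulLeft R x ∘ₗ mulRight R x ∘ₗ antipode R) (comul a)) =
      counit (R := R) a • x := by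
  have hcancel (r : H) : r * antipode R x * x = r := by
    rw [mul_assoc, hx.antipode_mul_cancel, mul_one]
  rw [← (ℛ R a).eq]
  simp [map_sum, ← mul_assoc, hcancel, ← Finset.sum_mul, sum_mul_antipode_eq_smul]

end Translate

theorem antipode_comp_convMul_self {R C H : Type*} [CommSemiring R] [AddCommMonoid C]
    [Module R C] [Coalgebra R C] [Semiring H] [HopfAlgebra R H] (f : C →ₗc[R] H) :
    toConv (antipode R ∘ₗ (f : C →ₗ[R] H)) * toConv (f : C →ₗ[R] H) = 1 := by
  have h := LinearMap.convMul_comp_coalgHom_distrib (toConv (antipode R)) (toConv .id) f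
  rw [LinearMap.antipode_mul_id, ofConv_toConv] at h
  ext c
  simpa using congr($h.symm c)

theorem mulTriple_map_comul2 {k C H : Type*} [Field k] [AddCommGroup C] [Module k C]
    [Coalgebra k C] [Ring H] [HopfAlgebra k H] (f g h : C →ₗ[k] H) (a : C) :
    mulTriple k H (map f (map g h) (comul2 k a)) = (toConv f * (toConv g * toConv h)) a := by
  simp only [comul2, LinearMap.comp_apply, LinearMap.convMul_apply]
  induction comul (R := k) a with
  | zero => simp
  | add s t hs ht => simp only [map_add, hs, ht]
  | tmul u v => simp [mulTriple]

theorem map_mul_mul_eq_of_map_mul {M A : Type*} [Monoid M] [Monoid A] (T : M → A) (s v : A)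
    {x y : M} (hT : ∀ b c, T (b * c) = T b * (s * T c)) (hxy : x * y = 1) (hv : v * T x = 1)
    (b c : M) : T (b * y * c) = T b * (v * T c) := by
  have hc : T c = T x * (s * T (y * c)) := by rw [← hT, ← mul_assoc, hxy, one_mul]
  rw [mul_assoc, hT, hc, ← mul_assoc v, hv, one_mul]

section RightTranslation

variable {k C : Type*} [Field k] [AddCommGroup C] [Module k C] [Coalgebra k C]
  {μ : (C ⊗[k] C) →ₗ[k] C} {x : C}

theorem IsGroupLikeElem.comul_rmulBy (hx : IsGroupLikeElem k x)
    (hcomul : ∀ a b : C, comul (R := k) (μ (a ⊗ₜ[k] b)) =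
      TensorProduct.map μ μ (tensorTensorTensorComm k C C C C (comul a ⊗ₜ[k] comul b)))
    (a : C) :
    comul (R := k) (rmulBy k μ x a) =
      TensorProduct.map (rmulBy k μ x) (rmulBy k μ x) (comul a) := by
  change comul (μ (a ⊗ₜ x)) = _
  rw [hcomul, hx.comul_eq_tmul_self]
  induction comul (R := k) a with
  | zero => simp
  | add s t hs ht => simp only [add_tmul, map_add, hs, ht]
  | tmul u v => rfl

theorem IsGroupLikeElem.counit_rmulBy (hx : IsGroupLikeElem k x)
    (hcounit : ∀ a b : C, counit (R := k) (μ (a ⊗ₜ[k] b)) = counit a * counit b) (a : C) :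
    counit (R := k) (rmulBy k μ x a) = counit a := by
  change counit (μ (a ⊗ₜ x)) = _
  rw [hcounit, hx.counit_eq_one, mul_one]

def rmulByCoalgHom (hx : IsGroupLikeElem k x)
    (hcomul : ∀ a b : C, comul (R := k) (μ (a ⊗ₜ[k] b)) =
      TensorProduct.map μ μ (tensorTensorTensorComm k C C C C (comul a ⊗ₜ[k] comul b)))
    (hcounit : ∀ a b : C, counit (R := k) (μ (a ⊗ₜ[k] b)) = counit a * counit b) :
    C →ₗc[k] C where
  toLinearMap := rmulBy k μ x
  counit_comp := LinearMap.ext (hx.counit_rmulBy hcounit)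
  map_comp_comul := LinearMap.ext fun a ↦ (hx.comul_rmulBy hcomul a).symm

end RightTranslation

theorem hopfTruss_translate_general {k : Type*} [Field k] {H : Type*} [Ring H] [HopfAlgebra k H]
    (μ : (H ⊗[k] H) →ₗ[k] H) (σ : H →ₗ[k] H)
    -- `(H, ∘ = μ)` is a nonunital bialgebra
    (hcomul : ∀ a b : H, Coalgebra.comul (R := k) (μ (a ⊗ₜ[k] b)) =
      TensorProduct.map μ μ ((tensorTensorTensorComm k H H H H)
        ((Coalgebra.comul (R := k) a) ⊗ₜ[k] (Coalgebra.comul (R := k) b))))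
    (hcounit : ∀ a b : H, Coalgebra.counit (R := k) (μ (a ⊗ₜ[k] b)) =
      Coalgebra.counit (R := k) a * Coalgebra.counit (R := k) b)
    -- truss condition `a∘(b·c) = (a₁∘b)·S(σ(a₂))·(a₃∘c)`
    (htruss : ∀ a b c : H, μ (a ⊗ₜ[k] (b * c)) =
      mulTriple k H ((TensorProduct.map (rmulBy k μ b)
        (TensorProduct.map ((HopfAlgebra.antipode (R := k)) ∘ₗ σ) (rmulBy k μ c)))
        (comul2 k a)))
    (x : H) (hx : IsGrouplike k x) :
    -- `·ₓ` is associative with two-sided unit `x`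
    (∀ a b c : H, (a * HopfAlgebra.antipode (R := k) x * b) *
        HopfAlgebra.antipode (R := k) x * c =
      a * HopfAlgebra.antipode (R := k) x * (b * HopfAlgebra.antipode (R := k) x * c)) ∧
    (∀ a : H, x * HopfAlgebra.antipode (R := k) x * a = a ∧
      a * HopfAlgebra.antipode (R := k) x * x = a) ∧
    -- `(H, ·ₓ)` is a bialgebra
    (∀ a b : H, Coalgebra.comul (R := k)
        ((LinearMap.mul' k H ∘ₗ TensorProduct.map
          (LinearMap.mulRight k (HopfAlgebra.antipode (R := k) x)) LinearMap.id)
          (a ⊗ₜ[k] b)) =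
      TensorProduct.map
        (LinearMap.mul' k H ∘ₗ TensorProduct.map
          (LinearMap.mulRight k (HopfAlgebra.antipode (R := k) x)) LinearMap.id)
        (LinearMap.mul' k H ∘ₗ TensorProduct.map
          (LinearMap.mulRight k (HopfAlgebra.antipode (R := k) x)) LinearMap.id)
        ((tensorTensorTensorComm k H H H H)
          ((Coalgebra.comul (R := k) a) ⊗ₜ[k] (Coalgebra.comul (R := k) b)))) ∧
    (∀ a b : H, Coalgebra.counit (R := k) (a * HopfAlgebra.antipode (R := k) x * b) =
      Coalgebra.counit (R := k) a * Coalgebra.counit (R := k) b) ∧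
    -- `S_x(a) = x·S(a)·x` is an antipode for `·ₓ`
    (∀ a : H,
      (LinearMap.mul' k H ∘ₗ TensorProduct.map
          (LinearMap.mulRight k (HopfAlgebra.antipode (R := k) x)) LinearMap.id)
        (TensorProduct.map
          ((LinearMap.mulLeft k x) ∘ₗ (LinearMap.mulRight k x) ∘ₗ
            (HopfAlgebra.antipode (R := k))) LinearMap.id (Coalgebra.comul (R := k) a)) =
        Coalgebra.counit (R := k) a • x ∧
      (LinearMap.mul' k H ∘ₗ TensorProduct.map
          (LinearMap.mulRight k (HopfAlgebra.antipode (R := k) x)) LinearMap.id)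
        (TensorProduct.map LinearMap.id
          ((LinearMap.mulLeft k x) ∘ₗ (LinearMap.mulRight k x) ∘ₗ
            (HopfAlgebra.antipode (R := k))) (Coalgebra.comul (R := k) a)) =
        Coalgebra.counit (R := k) a • x) ∧
    -- `σ_x(a) = a∘x` is a coalgebra endomorphism
    (∀ a : H, Coalgebra.comul (R := k) (rmulBy k μ x a) =
      TensorProduct.map (rmulBy k μ x) (rmulBy k μ x) (Coalgebra.comul (R := k) a)) ∧
    (∀ a : H, Coalgebra.counit (R := k) (rmulBy k μ x a) = Coalgebra.counit (R := k) a) ∧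
    -- the new truss condition in explicit form: `a∘(b·S(x)·c) = (a₁∘b)·S(a₂∘x)·(a₃∘c)`
    (∀ a b c : H, μ (a ⊗ₜ[k] (b * HopfAlgebra.antipode (R := k) x * c)) =
      mulTriple k H ((TensorProduct.map (rmulBy k μ b)
        (TensorProduct.map ((HopfAlgebra.antipode (R := k)) ∘ₗ (rmulBy k μ x))
          (rmulBy k μ c))) (comul2 k a))) := by
  have hg : IsGroupLikeElem k x := hx.isGroupLikeElem
  refine ⟨fun a b c ↦ by simp only [mul_assoc], fun a ↦ ⟨?_, ?_⟩, fun a b ↦ ?_, fun a b ↦ ?_,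
    fun a ↦ ⟨hg.translated_mul_antipode_rTensor_comul a,
      hg.translated_mul_antipode_lTensor_comul a⟩,
    hg.comul_rmulBy hcomul, hg.counit_rmulBy hcounit, fun a b c ↦ ?_⟩
  · rw [hg.mul_antipode_cancel, one_mul]
  · rw [mul_assoc, hg.antipode_mul_cancel, mul_one]
  · rw [mul'_comp_map_mulRight_id_tmul, Bialgebra.comul_mul, Bialgebra.comul_mul,
      hg.antipode.comul_eq_tmul_self, mul_tmul_mul_eq_map_tensorTensorTensorComm]
  · rw [Bialgebra.counit_mul, Bialgebra.counit_mul, hg.antipode.counit_eq_one, mul_one]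
  · have htrussConv (b c : H) : toConv (rmulBy k μ (b * c)) =
        toConv (rmulBy k μ b) * (toConv (antipode k ∘ₗ σ) * toConv (rmulBy k μ c)) :=
      WithConv.ext <| LinearMap.ext fun a ↦ (htruss a b c).trans (mulTriple_map_comul2 _ _ _ a)
    have htranslated := map_mul_mul_eq_of_map_mul (fun b ↦ toConv (rmulBy k μ b)) _ _ htrussConv
      hg.mul_antipode_cancel (antipode_comp_convMul_self (rmulByCoalgHom hg hcomul hcounit)) b c
    rw [mulTriple_map_comul2]
    exact congr($htranslated a)

/-- given a Hopf truss `(H,·,∘,σ)` and a group-like `x`, the operations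
`a ·ₓ b := a·S(x)·b`, `S_x(a) = x·S(a)·x` and `σ_x(a) := a∘x` make `(H, ·ₓ, ∘, σ_x)` a Hopf
truss, with `(H,·ₓ)` a Hopf algebra with unit `x`. -/
theorem hopfTruss_translate {k : Type*} [Field k] {H : Type*} [Ring H] [HopfAlgebra k H]
    (μ : (H ⊗[k] H) →ₗ[k] H) (σ : H →ₗ[k] H)
    -- `(H, ∘ = μ)` is a nonunital bialgebra
    (hassoc : ∀ a b c : H, μ (μ (a ⊗ₜ[k] b) ⊗ₜ[k] c) = μ (a ⊗ₜ[k] μ (b ⊗ₜ[k] c)))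
    (hcomul : ∀ a b : H, Coalgebra.comul (R := k) (μ (a ⊗ₜ[k] b)) =
      TensorProduct.map μ μ ((tensorTensorTensorComm k H H H H)
        ((Coalgebra.comul (R := k) a) ⊗ₜ[k] (Coalgebra.comul (R := k) b))))
    (hcounit : ∀ a b : H, Coalgebra.counit (R := k) (μ (a ⊗ₜ[k] b)) =
      Coalgebra.counit (R := k) a * Coalgebra.counit (R := k) b)
    -- `σ` is a coalgebra endomorphism
    (hσ1 : ∀ a : H, Coalgebra.comul (R := k) (σ a) =
      TensorProduct.map σ σ (Coalgebra.comul (R := k) a))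
    (hσ2 : ∀ a : H, Coalgebra.counit (R := k) (σ a) = Coalgebra.counit (R := k) a)
    -- truss condition `a∘(b·c) = (a₁∘b)·S(σ(a₂))·(a₃∘c)`
    (htruss : ∀ a b c : H, μ (a ⊗ₜ[k] (b * c)) =
      mulTriple k H ((TensorProduct.map (rmulBy k μ b)
        (TensorProduct.map ((HopfAlgebra.antipode (R := k)) ∘ₗ σ) (rmulBy k μ c)))
        (comul2 k a)))
    (x : H) (hx : IsGrouplike k x) :
    -- `·ₓ` is associative with two-sided unit `x`
    (∀ a b c : H, (a * HopfAlgebra.antipode (R := k) x * b) *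
        HopfAlgebra.antipode (R := k) x * c =
      a * HopfAlgebra.antipode (R := k) x * (b * HopfAlgebra.antipode (R := k) x * c)) ∧
    (∀ a : H, x * HopfAlgebra.antipode (R := k) x * a = a ∧
      a * HopfAlgebra.antipode (R := k) x * x = a) ∧
    -- `(H, ·ₓ)` is a bialgebra
    (∀ a b : H, Coalgebra.comul (R := k)
        ((LinearMap.mul' k H ∘ₗ TensorProduct.map
          (LinearMap.mulRight k (HopfAlgebra.antipode (R := k) x)) LinearMap.id)
          (a ⊗ₜ[k] b)) =
      TensorProduct.map
        (LinearMap.mul' k H ∘ₗ TensorProduct.map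
          (LinearMap.mulRight k (HopfAlgebra.antipode (R := k) x)) LinearMap.id)
        (LinearMap.mul' k H ∘ₗ TensorProduct.map
          (LinearMap.mulRight k (HopfAlgebra.antipode (R := k) x)) LinearMap.id)
        ((tensorTensorTensorComm k H H H H)
          ((Coalgebra.comul (R := k) a) ⊗ₜ[k] (Coalgebra.comul (R := k) b)))) ∧
    (∀ a b : H, Coalgebra.counit (R := k) (a * HopfAlgebra.antipode (R := k) x * b) =
      Coalgebra.counit (R := k) a * Coalgebra.counit (R := k) b) ∧
    -- `S_x(a) = x·S(a)·x` is an antipode for `·ₓ`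
    (∀ a : H,
      (LinearMap.mul' k H ∘ₗ TensorProduct.map
          (LinearMap.mulRight k (HopfAlgebra.antipode (R := k) x)) LinearMap.id)
        (TensorProduct.map
          ((LinearMap.mulLeft k x) ∘ₗ (LinearMap.mulRight k x) ∘ₗ
            (HopfAlgebra.antipode (R := k))) LinearMap.id (Coalgebra.comul (R := k) a)) =
        Coalgebra.counit (R := k) a • x ∧
      (LinearMap.mul' k H ∘ₗ TensorProduct.map
          (LinearMap.mulRight k (HopfAlgebra.antipode (R := k) x)) LinearMap.id)
        (TensorProduct.map LinearMap.id
          ((LinearMap.mulLeft k x) ∘ₗ (LinearMap.mulRight k x) ∘ₗ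
            (HopfAlgebra.antipode (R := k))) (Coalgebra.comul (R := k) a)) =
        Coalgebra.counit (R := k) a • x) ∧
    -- `σ_x(a) = a∘x` is a coalgebra endomorphism
    (∀ a : H, Coalgebra.comul (R := k) (rmulBy k μ x a) =
      TensorProduct.map (rmulBy k μ x) (rmulBy k μ x) (Coalgebra.comul (R := k) a)) ∧
    (∀ a : H, Coalgebra.counit (R := k) (rmulBy k μ x a) = Coalgebra.counit (R := k) a) ∧
    -- the new truss condition in explicit form: `a∘(b·S(x)·c) = (a₁∘b)·S(a₂∘x)·(a₃∘c)`
    (∀ a b c : H, μ (a ⊗ₜ[k] (b * HopfAlgebra.antipode (R := k) x * c)) =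
      mulTriple k H ((TensorProduct.map (rmulBy k μ b)
        (TensorProduct.map ((HopfAlgebra.antipode (R := k)) ∘ₗ (rmulBy k μ x))
          (rmulBy k μ c))) (comul2 k a))) :=
  hopfTruss_translate_general μ σ hcomul hcounit htruss x hx
end
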